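/- arXiv:1102.1829 — 12 statements merged into one kernel-verified Lean document; each statement's English description precedes it below -/
import Mathlib

section
/- Let τ : ℤ⁵ → ℂ (arguments written (l₁,l₂,l₃,m,s)) be nowhere vanishing and satisfy, for each i = 1,2,3 and all (l₁,l₂,l₃,m,s) ∈ ℤ⁵, the bilinear discrete two-dimensional Toda lattice equation τ(l+eᵢ,m+1,s)·τ(l,m,s) − τ(l+eᵢ,m,s)·τ(l,m+1,s) = τ(l+eᵢ,m,s+1)·τ(l,m+1,s−1), where l = (l₁,l₂,l₃) and eᵢ is the i-th standard unit vector. Then for each fixed (m,s) ∈ ℤ², the function z(l₁,l₂,l₃) = τ(l,m+1,s)/τ(l,m,s) satisfies the discrete Schwarzian KP equation in product form at every point of ℤ³. -/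
/-!
Dividing the Toda equation in direction `i` by `τ(l+eᵢ,m,s) τ(l,m,s)` shows that every
difference of `z` factors as `z(l+eᵢ) - z(l) = P(l+eᵢ) Q(l)`, with `P = τ(·,m,s+1)/τ(·,m,s)`
and `Q = τ(·,m+1,s-1)/τ(·,m,s)` independent of `i`. Then each side of dSKP is, up to sign,
the product `∏_{i<j} P(l+eᵢ+eⱼ) · ∏ₖ Q(l+eₖ)`.
-/

theorem dskp_of_sub_eq_mul {R : Type*} [CommRing R] (z P Q : ℤ → ℤ → ℤ → R)
    (h₁ : ∀ a b c : ℤ, z (a+1) b c - z a b c = P (a+1) b c * Q a b c)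
    (h₂ : ∀ a b c : ℤ, z a (b+1) c - z a b c = P a (b+1) c * Q a b c)
    (h₃ : ∀ a b c : ℤ, z a b (c+1) - z a b c = P a b (c+1) * Q a b c)
    (l₁ l₂ l₃ : ℤ) :
    (z (l₁+1) l₂ l₃ - z (l₁+1) (l₂+1) l₃) * (z l₁ (l₂+1) l₃ - z l₁ (l₂+1) (l₃+1))
        * (z l₁ l₂ (l₃+1) - z (l₁+1) l₂ (l₃+1))
      = -((z (l₁+1) (l₂+1) l₃ - z l₁ (l₂+1) l₃) * (z l₁ (l₂+1) (l₃+1) - z l₁ l₂ (l₃+1))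
          * (z (l₁+1) l₂ (l₃+1) - z (l₁+1) l₂ l₃)) := by
  rw [← neg_sub (z (l₁+1) (l₂+1) l₃), ← neg_sub (z l₁ (l₂+1) (l₃+1)),
    ← neg_sub (z (l₁+1) l₂ (l₃+1)), h₂ (l₁+1), h₃ l₁ (l₂+1), h₁ l₁ l₂ (l₃+1),
    h₁ l₁ (l₂+1), h₂ l₁ l₂ (l₃+1), h₃ (l₁+1)]
  ring

theorem div_sub_div_eq_of_mul_sub_mul {K : Type*} [Field K] {a b c d e f : K}
    (hb : b ≠ 0) (hc : c ≠ 0) (h : a * b - c * d = e * f) :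
    a / c - d / b = e / c * (f / b) := by
  rw [div_sub_div _ _ hc hb, h]
  ring

/-- If a nowhere vanishing `τ : ℤ⁵ → ℂ` satisfies the bilinear discrete two-dimensional
Toda lattice equations in each of the directions `l₁, l₂, l₃`, then for each fixed `(m,s)`
the ratio `z = τ^{m+1}/τ^m` satisfies the discrete Schwarzian KP equation in product form. -/
theorem stmt_0 (τ : ℤ → ℤ → ℤ → ℤ → ℤ → ℂ)
    (hτ : ∀ l₁ l₂ l₃ m s : ℤ, τ l₁ l₂ l₃ m s ≠ 0)
    (h1 : ∀ l₁ l₂ l₃ m s : ℤ,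
      τ (l₁+1) l₂ l₃ (m+1) s * τ l₁ l₂ l₃ m s - τ (l₁+1) l₂ l₃ m s * τ l₁ l₂ l₃ (m+1) s
        = τ (l₁+1) l₂ l₃ m (s+1) * τ l₁ l₂ l₃ (m+1) (s-1))
    (h2 : ∀ l₁ l₂ l₃ m s : ℤ,
      τ l₁ (l₂+1) l₃ (m+1) s * τ l₁ l₂ l₃ m s - τ l₁ (l₂+1) l₃ m s * τ l₁ l₂ l₃ (m+1) s
        = τ l₁ (l₂+1) l₃ m (s+1) * τ l₁ l₂ l₃ (m+1) (s-1))
    (h3 : ∀ l₁ l₂ l₃ m s : ℤ,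
      τ l₁ l₂ (l₃+1) (m+1) s * τ l₁ l₂ l₃ m s - τ l₁ l₂ (l₃+1) m s * τ l₁ l₂ l₃ (m+1) s
        = τ l₁ l₂ (l₃+1) m (s+1) * τ l₁ l₂ l₃ (m+1) (s-1))
    (m s : ℤ) (z : ℤ → ℤ → ℤ → ℂ)
    (hz : ∀ l₁ l₂ l₃ : ℤ, z l₁ l₂ l₃ = τ l₁ l₂ l₃ (m+1) s / τ l₁ l₂ l₃ m s) :
    ∀ l₁ l₂ l₃ : ℤ,
      (z (l₁+1) l₂ l₃ - z (l₁+1) (l₂+1) l₃) * (z l₁ (l₂+1) l₃ - z l₁ (l₂+1) (l₃+1))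
          * (z l₁ l₂ (l₃+1) - z (l₁+1) l₂ (l₃+1))
        = -((z (l₁+1) (l₂+1) l₃ - z l₁ (l₂+1) l₃) * (z l₁ (l₂+1) (l₃+1) - z l₁ l₂ (l₃+1))
            * (z (l₁+1) l₂ (l₃+1) - z (l₁+1) l₂ l₃)) := by
  refine dskp_of_sub_eq_mul z (fun a b c ↦ τ a b c m (s+1) / τ a b c m s)
    (fun a b c ↦ τ a b c (m+1) (s-1) / τ a b c m s) ?_ ?_ ?_
  · intro a b c
    rw [hz, hz]
    exact div_sub_div_eq_of_mul_sub_mul (hτ _ _ _ _ _) (hτ _ _ _ _ _) (h1 a b c m s)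
  · intro a b c
    rw [hz, hz]
    exact div_sub_div_eq_of_mul_sub_mul (hτ _ _ _ _ _) (hτ _ _ _ _ _) (h2 a b c m s)
  · intro a b c
    rw [hz, hz]
    exact div_sub_div_eq_of_mul_sub_mul (hτ _ _ _ _ _) (hτ _ _ _ _ _) (h3 a b c m s)
end

section
/- Let τ : ℤ⁵ → ℂ (arguments written (l₁,l₂,l₃,m,s)) be nowhere vanishing and satisfy, for each i = 1,2,3 and all (l₁,l₂,l₃,m,s) ∈ ℤ⁵, the reversed bilinear equation τ(l,m+1,s)·τ(l+eᵢ,m,s) − τ(l,m,s)·τ(l+eᵢ,m+1,s) = τ(l,m,s+1)·τ(l+eᵢ,m+1,s−1), where l = (l₁,l₂,l₃) and eᵢ is the i-th standard unit vector. Then for each fixed (m,s) ∈ ℤ², the function z(l₁,l₂,l₃) = τ(l,m+1,s)/τ(l,m,s) satisfies the discrete Schwarzian KP equation in product form at every point of ℤ³. -/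
/-!
In direction `i` the bilinear equation says exactly that
`z - z_{lᵢ+1} = τ(l,m,s+1) τ(l+eᵢ,m+1,s-1) / (τ(l,m,s) τ(l+eᵢ,m,s))`.
Every difference in the dSKP equation is of this form (up to sign), and after substituting
these factorizations both sides become the same product of values of `τ`.
-/

def SatisfiesDSKP {K : Type*} [Field K] (z : ℤ → ℤ → ℤ → K) : Prop :=
  ∀ l₁ l₂ l₃ : ℤ,
    (z (l₁+1) l₂ l₃ - z (l₁+1) (l₂+1) l₃) * (z l₁ (l₂+1) l₃ - z l₁ (l₂+1) (l₃+1))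
        * (z l₁ l₂ (l₃+1) - z (l₁+1) l₂ (l₃+1))
      = -((z (l₁+1) (l₂+1) l₃ - z l₁ (l₂+1) l₃) * (z l₁ (l₂+1) (l₃+1) - z l₁ l₂ (l₃+1))
          * (z (l₁+1) l₂ (l₃+1) - z (l₁+1) l₂ l₃))

theorem satisfiesDSKP_of_sub_eq {K : Type*} [Field K] (z N M D : ℤ → ℤ → ℤ → K)
    (h₁ : ∀ l₁ l₂ l₃, z l₁ l₂ l₃ - z (l₁+1) l₂ l₃
      = N l₁ l₂ l₃ * M (l₁+1) l₂ l₃ / (D l₁ l₂ l₃ * D (l₁+1) l₂ l₃))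
    (h₂ : ∀ l₁ l₂ l₃, z l₁ l₂ l₃ - z l₁ (l₂+1) l₃
      = N l₁ l₂ l₃ * M l₁ (l₂+1) l₃ / (D l₁ l₂ l₃ * D l₁ (l₂+1) l₃))
    (h₃ : ∀ l₁ l₂ l₃, z l₁ l₂ l₃ - z l₁ l₂ (l₃+1)
      = N l₁ l₂ l₃ * M l₁ l₂ (l₃+1) / (D l₁ l₂ l₃ * D l₁ l₂ (l₃+1))) :
    SatisfiesDSKP z := by
  intro l₁ l₂ l₃
  rw [← neg_sub (z l₁ (l₂+1) l₃), ← neg_sub (z l₁ l₂ (l₃+1)), ← neg_sub (z (l₁+1) l₂ l₃),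
    h₁ l₁ l₂ (l₃+1), h₁ l₁ (l₂+1) l₃, h₂ (l₁+1) l₂ l₃, h₂ l₁ l₂ (l₃+1), h₃ l₁ (l₂+1) l₃,
    h₃ (l₁+1) l₂ l₃]
  ring

/-- If a nowhere vanishing `τ : ℤ⁵ → ℂ` satisfies the reversed bilinear discrete
two-dimensional Toda lattice equations in each of the directions `l₁, l₂, l₃`, then for each
fixed `(m,s)` the ratio `z = τ^{m+1}/τ^m` satisfies the discrete Schwarzian KP equation in
product form. -/
theorem stmt_1 (τ : ℤ → ℤ → ℤ → ℤ → ℤ → ℂ)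
    (hτ : ∀ l₁ l₂ l₃ m s : ℤ, τ l₁ l₂ l₃ m s ≠ 0)
    (h1 : ∀ l₁ l₂ l₃ m s : ℤ,
      τ l₁ l₂ l₃ (m+1) s * τ (l₁+1) l₂ l₃ m s - τ l₁ l₂ l₃ m s * τ (l₁+1) l₂ l₃ (m+1) s
        = τ l₁ l₂ l₃ m (s+1) * τ (l₁+1) l₂ l₃ (m+1) (s-1))
    (h2 : ∀ l₁ l₂ l₃ m s : ℤ,
      τ l₁ l₂ l₃ (m+1) s * τ l₁ (l₂+1) l₃ m s - τ l₁ l₂ l₃ m s * τ l₁ (l₂+1) l₃ (m+1) s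
        = τ l₁ l₂ l₃ m (s+1) * τ l₁ (l₂+1) l₃ (m+1) (s-1))
    (h3 : ∀ l₁ l₂ l₃ m s : ℤ,
      τ l₁ l₂ l₃ (m+1) s * τ l₁ l₂ (l₃+1) m s - τ l₁ l₂ l₃ m s * τ l₁ l₂ (l₃+1) (m+1) s
        = τ l₁ l₂ l₃ m (s+1) * τ l₁ l₂ (l₃+1) (m+1) (s-1))
    (m s : ℤ) (z : ℤ → ℤ → ℤ → ℂ)
    (hz : ∀ l₁ l₂ l₃ : ℤ, z l₁ l₂ l₃ = τ l₁ l₂ l₃ (m+1) s / τ l₁ l₂ l₃ m s) :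
    ∀ l₁ l₂ l₃ : ℤ,
      (z (l₁+1) l₂ l₃ - z (l₁+1) (l₂+1) l₃) * (z l₁ (l₂+1) l₃ - z l₁ (l₂+1) (l₃+1))
          * (z l₁ l₂ (l₃+1) - z (l₁+1) l₂ (l₃+1))
        = -((z (l₁+1) (l₂+1) l₃ - z l₁ (l₂+1) l₃) * (z l₁ (l₂+1) (l₃+1) - z l₁ l₂ (l₃+1))
            * (z (l₁+1) l₂ (l₃+1) - z (l₁+1) l₂ l₃)) := by
  refine satisfiesDSKP_of_sub_eq z (fun l₁ l₂ l₃ => τ l₁ l₂ l₃ m (s+1))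
    (fun l₁ l₂ l₃ => τ l₁ l₂ l₃ (m+1) (s-1)) (fun l₁ l₂ l₃ => τ l₁ l₂ l₃ m s) ?_ ?_ ?_
  · intro l₁ l₂ l₃
    rw [hz, hz, div_sub_div _ _ (hτ _ _ _ _ _) (hτ _ _ _ _ _), h1]
  · intro l₁ l₂ l₃
    rw [hz, hz, div_sub_div _ _ (hτ _ _ _ _ _) (hτ _ _ _ _ _), h2]
  · intro l₁ l₂ l₃
    rw [hz, hz, div_sub_div _ _ (hτ _ _ _ _ _) (hτ _ _ _ _ _), h3]
end

section
/- Let N ≥ 1, b ∈ ℂ, a₁,a₂,a₃ : ℤ → ℂ, and let φ₁,…,φ_N : ℤ⁵ → ℂ (arguments (l₁,l₂,l₃,m,s)) satisfy, for all arguments and each k = 1,2,3: φᵢ(l,m,s) − φᵢ(l−e_k,m,s) = a_k(l_k−1)·φᵢ(l,m,s+1), and also φᵢ(l,m,s) − φᵢ(l,m−1,s) = −b·φᵢ(l,m,s−1), where l = (l₁,l₂,l₃) and e_k is the k-th unit vector. Define the Casorati determinant σ(l,m,s) = det( φᵢ(l,m,s+j−1) )_{i,j=1,…,N}. Then for each k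 = 1,2,3 and all (l,m,s) ∈ ℤ⁵: (1+a_k(l_k)b)·σ(l+e_k,m+1,s)·σ(l,m,s) − σ(l+e_k,m,s)·σ(l,m+1,s) = a_k(l_k)·b·σ(l+e_k,m,s+1)·σ(l,m+1,s−1). -/
/-!
Fix `l, m, s`, write `w t` for the vector `(φᵢ(l, m, t))ᵢ`, `N = n + 2`,
`Φ = (w (s+1), …, w (s+n))`, and `D x y = det [x; Φ; y]`. The dispersion relations act on Casorati
matrices as triangular row operations; with multilinearity they turn each of the six terms of the
bilinear equation into a product of two values of `D`, up to sign. The equation then becomes the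
three-term Plücker relation `D x₁ x₂ D x₃ x₄ - D x₁ x₃ D x₂ x₄ + D x₁ x₄ D x₂ x₃ = 0`, whose left
side is linear in `x₁` and vanishes when `x₁` is `x₂`, `x₃`, `x₄` or a row of `Φ`; these span the
whole space unless every `D xᵢ xⱼ` with `2 ≤ i < j` vanishes.
-/

open Matrix

section Triangular

variable {R n : Type*} [CommRing R] [Fintype n] [DecidableEq n] [LinearOrder n]

theorem det_of_eq_of_sub_mem_span_Ioi {v w : n → n → R}
    (h : ∀ i, w i - v i ∈ Submodule.span R (v '' Set.Ioi i)) : (of w).det = (of v).det := by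
  choose c hc hcv using fun i => (Finsupp.mem_span_image_iff_linearCombination R).1 (h i)
  have hC : ∀ i j, ¬ i < j → c i j = 0 := fun i j hij =>
    Finsupp.notMem_support_iff.1 fun hj => hij (hc i hj)
  have hw : of w = (1 + of fun i j => c i j) * of v := by
    rw [add_mul, one_mul]
    ext i k
    have := congrFun (hcv i) k
    rw [Finsupp.linearCombination_apply, Finsupp.sum_fintype _ _ (by simp)] at this
    simp only [Finset.sum_apply, Pi.smul_apply, smul_eq_mul, Pi.sub_apply] at this
    simp only [Matrix.add_apply, mul_apply, of_apply, this]
    ring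
  rw [hw, det_mul, det_of_isUpperTriangular, Finset.prod_eq_one, one_mul]
  · intro i _
    simp [hC i i (lt_irrefl i)]
  · intro i j (hji : j < i)
    simp [one_apply_ne hji.ne', hC i j (not_lt_of_gt hji)]

theorem det_of_eq_of_sub_mem_span_Iio {v w : n → n → R}
    (h : ∀ i, w i - v i ∈ Submodule.span R (v '' Set.Iio i)) : (of w).det = (of v).det :=
  det_of_eq_of_sub_mem_span_Ioi (n := nᵒᵈ) h

end Triangular

theorem det_of_eq_zero_of_forall_mem {K n : Type*} [Field K] [Fintype n] [DecidableEq n]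
    {v : n → n → K} {p : Submodule K (n → K)} (hp : p ≠ ⊤) (hv : ∀ i, v i ∈ p) :
    (of v).det = 0 := by
  by_contra h
  refine hp (eq_top_iff.2 ?_)
  rw [← (linearIndependent_rows_of_det_ne_zero h).span_eq_top_of_card_eq_finrank' (by simp)]
  exact Submodule.span_le.2 (Set.range_subset_iff.2 hv)

section ConsSnoc

variable {R : Type*} [CommRing R] {m : ℕ}

theorem det_of_cons_add_smul (x y : Fin (m + 1) → R) (c : R) (r : Fin m → Fin (m + 1) → R) :
    (of (Fin.cons (x + c • y) r)).det = (of (Fin.cons x r)).det + c * (of (Fin.cons y r)).det :=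
  (detRowAlternating.toMultilinearMap.cons_add r x (c • y)).trans
    (congrArg _ (detRowAlternating.toMultilinearMap.cons_smul r c y))

theorem det_of_snoc (r : Fin m → Fin (m + 1) → R) (y : Fin (m + 1) → R) :
    (of (Fin.snoc r y : Fin (m + 1) → Fin (m + 1) → R)).det
      = (-1) ^ m * (of (Fin.cons y r : Fin (m + 1) → Fin (m + 1) → R)).det := by
  rw [Fin.snoc_eq_cons_rotate]
  exact (det_permute (finRotate (m + 1)) (of (Fin.cons y r))).trans (by simp [sign_finRotate])

end ConsSnoc

section Bordered

variable {K : Type*} [Field K] {n : ℕ}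

def borderedDet (Φ : Fin n → Fin (n + 2) → K) (x y : Fin (n + 2) → K) : K :=
  (of (Fin.cons x (Fin.snoc Φ y : Fin (n + 1) → Fin (n + 2) → K))).det

variable (Φ : Fin n → Fin (n + 2) → K)

theorem borderedDet_smul (c : K) (x y : Fin (n + 2) → K) :
    borderedDet Φ (c • x) y = c * borderedDet Φ x y :=
  detRowAlternating.toMultilinearMap.cons_smul _ c x

theorem borderedDet_add_smul (x x' y : Fin (n + 2) → K) (c : K) :
    borderedDet Φ (x + c • x') y = borderedDet Φ x y + c * borderedDet Φ x' y :=
  det_of_cons_add_smul x x' c _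

theorem borderedDet_swap (x y : Fin (n + 2) → K) : borderedDet Φ y x = -borderedDet Φ x y := by
  have hswap : (Fin.cons y (Fin.snoc Φ x : Fin (n + 1) → _) : Fin (n + 2) → Fin (n + 2) → K)
      = Fin.cons x (Fin.snoc Φ y : Fin (n + 1) → _) ∘ Equiv.swap 0 (Fin.last _) := by
    ext i : 1
    cases i using Fin.cases with
    | zero => simp [← Fin.succ_last]
    | succ j =>
      cases j using Fin.lastCases with
      | last => simp [Fin.succ_last]
      | cast k =>
        rw [Function.comp_apply, Equiv.swap_apply_of_ne_of_ne (Fin.succ_ne_zero _)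
          (by simp [← Fin.succ_last, Fin.succ_inj, Fin.castSucc_ne_last])]
        simp only [Fin.cons_succ, Fin.snoc_castSucc]
  have h := det_permute (Equiv.swap 0 (Fin.last (n + 1))) (of (Fin.cons x (Fin.snoc Φ y)))
  rw [Equiv.Perm.sign_swap Fin.last_pos.ne] at h
  unfold borderedDet
  rw [hswap]
  exact h.trans (by simp)

theorem borderedDet_self (x : Fin (n + 2) → K) : borderedDet Φ x x = 0 :=
  det_zero_of_row_eq (Fin.last_pos.ne : (0 : Fin (n + 2)) ≠ Fin.last _) <| by
    ext; simp [← Fin.succ_last]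

theorem borderedDet_frame (k : Fin n) (y : Fin (n + 2) → K) : borderedDet Φ (Φ k) y = 0 :=
  det_zero_of_row_eq (Fin.succ_ne_zero k.castSucc).symm <| by
    ext; simp

theorem borderedDet_pluecker (x₁ x₂ x₃ x₄ : Fin (n + 2) → K) :
    borderedDet Φ x₁ x₂ * borderedDet Φ x₃ x₄ - borderedDet Φ x₁ x₃ * borderedDet Φ x₂ x₄
      + borderedDet Φ x₁ x₄ * borderedDet Φ x₂ x₃ = 0 := by
  set S := Submodule.span K (insert x₂ (insert x₃ (insert x₄ (Set.range Φ))))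
  by_cases hS : S = ⊤
  · let ℓ (y : Fin (n + 2) → K) : (Fin (n + 2) → K) →ₗ[K] K :=
      detRowAlternating.toMultilinearMap.toLinearMap (Fin.cons 0 (Fin.snoc Φ y)) 0
    have hℓ (x y : Fin (n + 2) → K) : ℓ y x = borderedDet Φ x y := by
      simp only [MultilinearMap.toLinearMap_apply, Fin.update_cons_zero,
        AlternatingMap.coe_multilinearMap, borderedDet, ℓ]
      rfl
    let L := borderedDet Φ x₃ x₄ • ℓ x₂ - borderedDet Φ x₂ x₄ • ℓ x₃ + borderedDet Φ x₂ x₃ • ℓ x₄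
    have hL : S ≤ LinearMap.ker L := by
      refine Submodule.span_le.2 ?_
      simp only [Set.insert_subset_iff, Set.range_subset_iff, SetLike.mem_coe,
        LinearMap.mem_ker, L, LinearMap.add_apply, LinearMap.sub_apply, LinearMap.smul_apply, hℓ,
        smul_eq_mul, borderedDet_self, borderedDet_frame]
      refine ⟨by ring, ?_, ?_, fun k => by ring⟩
      · rw [borderedDet_swap Φ x₂ x₃]; ring
      · rw [borderedDet_swap Φ x₂ x₄, borderedDet_swap Φ x₃ x₄]; ring
    have hx₁ := hL (hS ▸ Submodule.mem_top : x₁ ∈ S)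
    simp only [LinearMap.mem_ker, L, LinearMap.add_apply, LinearMap.sub_apply,
      LinearMap.smul_apply, hℓ, smul_eq_mul] at hx₁
    linear_combination hx₁
  · have hD : ∀ x ∈ S, ∀ y ∈ S, borderedDet Φ x y = 0 := fun x hx y hy =>
      det_of_eq_zero_of_forall_mem hS <| Fin.cases hx <| Fin.lastCases (by simpa using hy)
        fun k => by simpa using Submodule.subset_span (by simp)
    have h₂ : x₂ ∈ S := Submodule.subset_span (by simp)
    have h₃ : x₃ ∈ S := Submodule.subset_span (by simp)
    have h₄ : x₄ ∈ S := Submodule.subset_span (by simp)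
    rw [hD x₂ h₂ x₃ h₃, hD x₂ h₂ x₄ h₄, hD x₃ h₃ x₄ h₄]
    ring

end Bordered

section Casorati

def casorati {E : Type*} (f : ℤ → E) (s : ℤ) (m : ℕ) : Fin m → E := fun j => f (s + j)

theorem casorati_succ_eq_cons {E : Type*} (f : ℤ → E) (s : ℤ) (m : ℕ) :
    casorati f s (m + 1) = Fin.cons (f s) (casorati f (s + 1) m) := by
  funext j
  cases j using Fin.cases with
  | zero => simp [casorati]
  | succ j =>
    simp only [casorati, Fin.val_succ, Nat.cast_add, Nat.cast_one, Fin.cons_succ]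
    ring_nf

theorem casorati_succ_eq_snoc {E : Type*} (f : ℤ → E) (s : ℤ) (m : ℕ) :
    casorati f s (m + 1) = Fin.snoc (casorati f s m) (f (s + m)) := by
  funext j
  cases j using Fin.lastCases with
  | last => simp [casorati]
  | cast j => simp [casorati]

variable {K : Type*} [Field K]

/-- The shifts `f s, …, f (s + N - 1)` are the rows: this is the determinant of the transpose of
the Casorati matrix `(f (s + j) i)ᵢⱼ`. -/
def casoratiDet {N : ℕ} (f : ℤ → Fin N → K) (s : ℤ) : K := (of (casorati f s N)).det

theorem casoratiDet_fin_one (f : ℤ → Fin 1 → K) (s : ℤ) : casoratiDet f s = f s 0 := by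
  simp [casoratiDet, casorati]

theorem det_of_cons_casorati_self {m : ℕ} (f : ℤ → Fin (m + 2) → K) (s : ℤ) :
    (of (Fin.cons (f s) (casorati f s (m + 1)))).det = 0 :=
  det_zero_of_row_eq (Fin.succ_ne_zero 0).symm <| by ext; simp [casorati]

theorem casoratiDet_eq_det_of_cons_casorati {m : ℕ} {b : K} {f g : ℤ → Fin (m + 1) → K}
    (hg : ∀ t, g t = f t + b • f (t - 1)) (s : ℤ) :
    casoratiDet f s = (of (Fin.cons (f s) (casorati g (s + 1) m))).det := by
  refine (det_of_eq_of_sub_mem_span_Iio fun i => ?_).symm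
  cases i using Fin.cases with
  | zero => simp [casorati]
  | succ j =>
    have key : g (s + 1 + j) - f (s + (j + 1 : ℕ)) = b • casorati f s (m + 1) j.castSucc := by
      rw [hg]; simp only [casorati, Fin.val_castSucc]; push_cast; ring_nf
    simp only [Fin.cons_succ, casorati, Fin.val_succ] at key ⊢
    rw [key]
    exact Submodule.smul_mem _ b (Submodule.subset_span ⟨j.castSucc, j.castSucc_lt_succ, rfl⟩)

end Casorati

section Toda

variable {K : Type*} [Field K] {n : ℕ} {a b : K} {u v w z : ℤ → Fin (n + 2) → K} (s : ℤ)

theorem borderedDet_casorati_eq_det_of_cons (hz : ∀ t, z t = w t + a • z (t + 1))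
    (x : Fin (n + 2) → K) :
    borderedDet (casorati w (s + 1) n) x (z (s + 1 + n))
      = (of (Fin.cons x (casorati z (s + 1) (n + 1)))).det := by
  refine det_of_eq_of_sub_mem_span_Ioi fun i => ?_
  cases i using Fin.cases with
  | zero => simp
  | succ j =>
    cases j using Fin.lastCases with
    | last => simp [casorati]
    | cast k =>
      have key : w (s + 1 + k) - z (s + 1 + k) = -a • casorati z (s + 1) (n + 1) k.succ := by
        rw [hz]; simp only [casorati, Fin.val_succ]; push_cast; ring_nf; module
      simp only [Fin.cons_succ, Fin.snoc_castSucc, casorati, Fin.val_castSucc] at key ⊢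
      rw [key]
      exact Submodule.smul_mem _ _ (Submodule.subset_span ⟨k.succ.succ, by simp [Fin.lt_def], rfl⟩)

theorem borderedDet_casorati_succ_eq_zero (hz : ∀ t, z t = w t + a • z (t + 1)) :
    borderedDet (casorati w (s + 1) n) (z (s + 1)) (z (s + 1 + n)) = 0 := by
  rw [borderedDet_casorati_eq_det_of_cons s hz, det_of_cons_casorati_self]

theorem casoratiDet_eq_borderedDet_self :
    casoratiDet w s = borderedDet (casorati w (s + 1) n) (w s) (w (s + 1 + n)) := by
  rw [casoratiDet, casorati_succ_eq_cons, casorati_succ_eq_snoc]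
  rfl

theorem casoratiDet_eq_borderedDet_of_eq_add_smul_succ (hz : ∀ t, z t = w t + a • z (t + 1)) :
    casoratiDet z s = borderedDet (casorati w (s + 1) n) (w s) (z (s + 1 + n)) := by
  rw [casoratiDet, casorati_succ_eq_cons, ← borderedDet_casorati_eq_det_of_cons s hz, hz s,
    borderedDet_add_smul, borderedDet_casorati_succ_eq_zero s hz, mul_zero, add_zero]

theorem casoratiDet_eq_borderedDet_of_eq_add_smul_pred (hw : ∀ t, w t = u t + b • u (t - 1)) :
    casoratiDet u s = borderedDet (casorati w (s + 1) n) (u s) (w (s + 1 + n)) := by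
  rw [casoratiDet_eq_det_of_cons_casorati hw, casorati_succ_eq_snoc]
  rfl

theorem mul_casoratiDet_add_one_eq_borderedDet (hz : ∀ t, z t = w t + a • z (t + 1)) :
    a * casoratiDet z (s + 1)
      = (-1) ^ (n + 1) * borderedDet (casorati w (s + 1) n) (z (s + 1 + n)) (w (s + 1 + n)) := by
  have hrot : casoratiDet z (s + 1) = (-1) ^ (n + 1)
      * borderedDet (casorati w (s + 1) n) (z (s + 1 + 1 + n)) (w (s + 1 + n)) := by
    rw [casoratiDet_eq_borderedDet_of_eq_add_smul_succ _ hz, borderedDet,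
      Fin.cons_snoc_eq_snoc_cons, ← casorati_succ_eq_cons, casorati_succ_eq_snoc, det_of_snoc]
    rfl
  have hz' : z (s + 1 + n) = w (s + 1 + n) + a • z (s + 1 + 1 + n) := by
    rw [hz]; ring_nf
  rw [hrot, hz', borderedDet_add_smul, borderedDet_self]
  ring

theorem borderedDet_eq_mul_casoratiDet_sub_one (hw : ∀ t, w t = u t + b • u (t - 1)) :
    borderedDet (casorati w (s + 1) n) (u s) (w s)
      = (-1) ^ (n + 1) * (b * casoratiDet u (s - 1)) := by
  have hsplit := det_of_cons_casorati_self w s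
  rw [hw s, det_of_cons_add_smul] at hsplit
  rw [casoratiDet_eq_det_of_cons_casorati hw, sub_add_cancel, borderedDet_swap, borderedDet,
    Fin.cons_snoc_eq_snoc_cons, ← casorati_succ_eq_cons, det_of_snoc]
  linear_combination (-1) ^ n * hsplit

theorem one_add_mul_mul_casoratiDet_eq_borderedDet (hz : ∀ t, z t = w t + a • z (t + 1))
    (hv : ∀ t, v t = u t + a • v (t + 1)) (hzv : ∀ t, z t = v t + b • v (t - 1)) :
    (1 + a * b) * casoratiDet v s = borderedDet (casorati w (s + 1) n) (u s) (z (s + 1 + n)) := by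
  have hu : u s + a • z (s + 1) = (1 + a * b) • v s := by
    have hz₁ := hzv (s + 1)
    rw [add_sub_cancel_right] at hz₁
    linear_combination (norm := module) -(hv s) + a • hz₁
  rw [casoratiDet_eq_det_of_cons_casorati hzv, ← borderedDet_casorati_eq_det_of_cons s hz,
    ← borderedDet_smul, ← hu, borderedDet_add_smul, borderedDet_casorati_succ_eq_zero s hz,
    mul_zero, add_zero]

theorem casoratiDet_toda_of_two_le (hz : ∀ t, z t = w t + a • z (t + 1))
    (hv : ∀ t, v t = u t + a • v (t + 1)) (hw : ∀ t, w t = u t + b • u (t - 1))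
    (hzv : ∀ t, z t = v t + b • v (t - 1)) :
    (1 + a * b) * casoratiDet v s * casoratiDet w s - casoratiDet z s * casoratiDet u s
      = a * b * casoratiDet z (s + 1) * casoratiDet u (s - 1) := by
  have hV := one_add_mul_mul_casoratiDet_eq_borderedDet s hz hv hzv
  have hZ₁ := mul_casoratiDet_add_one_eq_borderedDet s hz
  have hU₁ := borderedDet_eq_mul_casoratiDet_sub_one s hw
  set D := borderedDet (casorati w (s + 1) n)
  have hP := borderedDet_pluecker (casorati w (s + 1) n) (u s) (w s) (w (s + 1 + n)) (z (s + 1 + n))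
  have hS := borderedDet_swap (casorati w (s + 1) n) (w (s + 1 + n)) (z (s + 1 + n))
  rw [casoratiDet_eq_borderedDet_self (w := w) s,
    casoratiDet_eq_borderedDet_of_eq_add_smul_succ s hz,
    casoratiDet_eq_borderedDet_of_eq_add_smul_pred s hw]
  linear_combination D (w s) (w (s + 1 + n)) * hV + hP - b * casoratiDet u (s - 1) * hZ₁
    - D (w (s + 1 + n)) (z (s + 1 + n)) * hU₁ - (-1) ^ (n + 1) * b * casoratiDet u (s - 1) * hS

end Toda

theorem casoratiDet_toda {K : Type*} [Field K] {N : ℕ} {a b : K} {u v w z : ℤ → Fin N → K}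
    (hz : ∀ t, z t = w t + a • z (t + 1)) (hv : ∀ t, v t = u t + a • v (t + 1))
    (hw : ∀ t, w t = u t + b • u (t - 1)) (hzv : ∀ t, z t = v t + b • v (t - 1)) (s : ℤ) :
    (1 + a * b) * casoratiDet v s * casoratiDet w s - casoratiDet z s * casoratiDet u s
      = a * b * casoratiDet z (s + 1) * casoratiDet u (s - 1) := by
  obtain _ | _ | n := N
  · simp [casoratiDet]
  · simp only [casoratiDet_fin_one]
    have e₁ := congrFun (hv s) 0
    have e₂ := congrFun (hv (s - 1)) 0
    have e₃ := congrFun (hw s) 0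
    have e₄ := congrFun (hzv s) 0
    have e₅ := congrFun (hzv (s + 1)) 0
    simp only [Pi.add_apply, Pi.smul_apply, smul_eq_mul, sub_add_cancel, add_sub_cancel_right]
      at e₁ e₂ e₃ e₄ e₅
    linear_combination b * u (s - 1) 0 * e₁ - b * u s 0 * e₂ + (1 + a * b) * v s 0 * e₃
      - u s 0 * e₄ - a * b * u (s - 1) 0 * e₅
  · exact casoratiDet_toda_of_two_le s hz hv hw hzv

theorem casoratiDet_toda_of_dispersion {K : Type*} [Field K] {N : ℕ} (a : ℤ → K) (b : K)
    (ψ : Fin N → ℤ → ℤ → ℤ → K)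
    (hl : ∀ i l m t, ψ i l m t - ψ i (l - 1) m t = a (l - 1) * ψ i l m (t + 1))
    (hm : ∀ i l m t, ψ i l m t - ψ i l (m - 1) t = -b * ψ i l m (t - 1)) (l m s : ℤ) :
    (1 + a l * b) * casoratiDet (fun t i => ψ i (l + 1) (m + 1) t) s
        * casoratiDet (fun t i => ψ i l m t) s
      - casoratiDet (fun t i => ψ i (l + 1) m t) s * casoratiDet (fun t i => ψ i l (m + 1) t) s
      = a l * b * casoratiDet (fun t i => ψ i (l + 1) m t) (s + 1)
        * casoratiDet (fun t i => ψ i l (m + 1) t) (s - 1) := by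
  have hl' (m t : ℤ) : (fun i => ψ i (l + 1) m t)
      = (fun i => ψ i l m t) + a l • fun i => ψ i (l + 1) m (t + 1) := by
    funext i
    have := hl i (l + 1) m t
    rw [add_sub_cancel_right] at this
    simp only [Pi.add_apply, Pi.smul_apply, smul_eq_mul]
    linear_combination this
  have hm' (l t : ℤ) : (fun i => ψ i l m t)
      = (fun i => ψ i l (m + 1) t) + b • fun i => ψ i l (m + 1) (t - 1) := by
    funext i
    have := hm i l (m + 1) t
    rw [add_sub_cancel_right] at this
    simp only [Pi.add_apply, Pi.smul_apply, smul_eq_mul]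
    linear_combination -this
  exact casoratiDet_toda (hl' m) (hl' (m + 1)) (hm' l) (hm' (l + 1)) s

theorem stmt_2_general (N : ℕ) (b : ℂ) (a₁ a₂ a₃ : ℤ → ℂ)
    (φ : Fin N → ℤ → ℤ → ℤ → ℤ → ℤ → ℂ)
    (hφ1 : ∀ (i : Fin N) (l₁ l₂ l₃ m s : ℤ),
      φ i l₁ l₂ l₃ m s - φ i (l₁-1) l₂ l₃ m s = a₁ (l₁-1) * φ i l₁ l₂ l₃ m (s+1))
    (hφ2 : ∀ (i : Fin N) (l₁ l₂ l₃ m s : ℤ),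
      φ i l₁ l₂ l₃ m s - φ i l₁ (l₂-1) l₃ m s = a₂ (l₂-1) * φ i l₁ l₂ l₃ m (s+1))
    (hφ3 : ∀ (i : Fin N) (l₁ l₂ l₃ m s : ℤ),
      φ i l₁ l₂ l₃ m s - φ i l₁ l₂ (l₃-1) m s = a₃ (l₃-1) * φ i l₁ l₂ l₃ m (s+1))
    (hφm : ∀ (i : Fin N) (l₁ l₂ l₃ m s : ℤ),
      φ i l₁ l₂ l₃ m s - φ i l₁ l₂ l₃ (m-1) s = -b * φ i l₁ l₂ l₃ m (s-1))
    (σ : ℤ → ℤ → ℤ → ℤ → ℤ → ℂ)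
    (hσ : ∀ l₁ l₂ l₃ m s : ℤ,
      σ l₁ l₂ l₃ m s = Matrix.det (Matrix.of fun i j : Fin N => φ i l₁ l₂ l₃ m (s + (j.1 : ℤ)))) :
    ∀ l₁ l₂ l₃ m s : ℤ,
      ((1 + a₁ l₁ * b) * σ (l₁+1) l₂ l₃ (m+1) s * σ l₁ l₂ l₃ m s
          - σ (l₁+1) l₂ l₃ m s * σ l₁ l₂ l₃ (m+1) s
        = a₁ l₁ * b * σ (l₁+1) l₂ l₃ m (s+1) * σ l₁ l₂ l₃ (m+1) (s-1))
      ∧ ((1 + a₂ l₂ * b) * σ l₁ (l₂+1) l₃ (m+1) s * σ l₁ l₂ l₃ m s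
          - σ l₁ (l₂+1) l₃ m s * σ l₁ l₂ l₃ (m+1) s
        = a₂ l₂ * b * σ l₁ (l₂+1) l₃ m (s+1) * σ l₁ l₂ l₃ (m+1) (s-1))
      ∧ ((1 + a₃ l₃ * b) * σ l₁ l₂ (l₃+1) (m+1) s * σ l₁ l₂ l₃ m s
          - σ l₁ l₂ (l₃+1) m s * σ l₁ l₂ l₃ (m+1) s
        = a₃ l₃ * b * σ l₁ l₂ (l₃+1) m (s+1) * σ l₁ l₂ l₃ (m+1) (s-1)) := by
  have hσ' (l₁ l₂ l₃ m s : ℤ) : σ l₁ l₂ l₃ m s = casoratiDet (fun t i => φ i l₁ l₂ l₃ m t) s := by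
    rw [hσ, ← det_transpose]
    rfl
  intro l₁ l₂ l₃ m s
  simp only [hσ']
  exact ⟨casoratiDet_toda_of_dispersion a₁ b (fun i l m t => φ i l l₂ l₃ m t)
      (fun i l m t => hφ1 i l l₂ l₃ m t) (fun i l m t => hφm i l l₂ l₃ m t) l₁ m s,
    casoratiDet_toda_of_dispersion a₂ b (fun i l m t => φ i l₁ l l₃ m t)
      (fun i l m t => hφ2 i l₁ l l₃ m t) (fun i l m t => hφm i l₁ l l₃ m t) l₂ m s,
    casoratiDet_toda_of_dispersion a₃ b (fun i l m t => φ i l₁ l₂ l m t)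
      (fun i l m t => hφ3 i l₁ l₂ l m t) (fun i l m t => hφm i l₁ l₂ l m t) l₃ m s⟩

/-- The Casorati determinant built from entries `φᵢ` satisfying the dispersion (linear)
relations satisfies the bilinear equations of the discrete two-dimensional Toda lattice
with coefficients, in each of the three lattice directions. -/
theorem stmt_2 (N : ℕ) (hN : 1 ≤ N) (b : ℂ) (a₁ a₂ a₃ : ℤ → ℂ)
    (φ : Fin N → ℤ → ℤ → ℤ → ℤ → ℤ → ℂ)
    (hφ1 : ∀ (i : Fin N) (l₁ l₂ l₃ m s : ℤ),
      φ i l₁ l₂ l₃ m s - φ i (l₁-1) l₂ l₃ m s = a₁ (l₁-1) * φ i l₁ l₂ l₃ m (s+1))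
    (hφ2 : ∀ (i : Fin N) (l₁ l₂ l₃ m s : ℤ),
      φ i l₁ l₂ l₃ m s - φ i l₁ (l₂-1) l₃ m s = a₂ (l₂-1) * φ i l₁ l₂ l₃ m (s+1))
    (hφ3 : ∀ (i : Fin N) (l₁ l₂ l₃ m s : ℤ),
      φ i l₁ l₂ l₃ m s - φ i l₁ l₂ (l₃-1) m s = a₃ (l₃-1) * φ i l₁ l₂ l₃ m (s+1))
    (hφm : ∀ (i : Fin N) (l₁ l₂ l₃ m s : ℤ),
      φ i l₁ l₂ l₃ m s - φ i l₁ l₂ l₃ (m-1) s = -b * φ i l₁ l₂ l₃ m (s-1))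
    (σ : ℤ → ℤ → ℤ → ℤ → ℤ → ℂ)
    (hσ : ∀ l₁ l₂ l₃ m s : ℤ,
      σ l₁ l₂ l₃ m s = Matrix.det (Matrix.of fun i j : Fin N => φ i l₁ l₂ l₃ m (s + (j.1 : ℤ)))) :
    ∀ l₁ l₂ l₃ m s : ℤ,
      ((1 + a₁ l₁ * b) * σ (l₁+1) l₂ l₃ (m+1) s * σ l₁ l₂ l₃ m s
          - σ (l₁+1) l₂ l₃ m s * σ l₁ l₂ l₃ (m+1) s
        = a₁ l₁ * b * σ (l₁+1) l₂ l₃ m (s+1) * σ l₁ l₂ l₃ (m+1) (s-1))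
      ∧ ((1 + a₂ l₂ * b) * σ l₁ (l₂+1) l₃ (m+1) s * σ l₁ l₂ l₃ m s
          - σ l₁ (l₂+1) l₃ m s * σ l₁ l₂ l₃ (m+1) s
        = a₂ l₂ * b * σ l₁ (l₂+1) l₃ m (s+1) * σ l₁ l₂ l₃ (m+1) (s-1))
      ∧ ((1 + a₃ l₃ * b) * σ l₁ l₂ (l₃+1) (m+1) s * σ l₁ l₂ l₃ m s
          - σ l₁ l₂ (l₃+1) m s * σ l₁ l₂ l₃ (m+1) s
        = a₃ l₃ * b * σ l₁ l₂ (l₃+1) m (s+1) * σ l₁ l₂ l₃ (m+1) (s-1)) :=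
  stmt_2_general N b a₁ a₂ a₃ φ hφ1 hφ2 hφ3 hφm σ hσ
end

section
/- Let b ∈ ℂ with b ≠ 0, and a₁,a₂,a₃ : ℤ → ℂ with a_k(l) ≠ 0 and 1+a_k(l)b ≠ 0 for all l ∈ ℤ and k = 1,2,3. Let σ : ℤ⁵ → ℂ (arguments (l₁,l₂,l₃,m,s)) satisfy, for each k = 1,2,3 and all arguments: (1+a_k(l_k)b)·σ(l+e_k,m+1,s)·σ(l,m,s) − σ(l+e_k,m,s)·σ(l,m+1,s) = a_k(l_k)·b·σ(l+e_k,m,s+1)·σ(l,m+1,s−1). Let g_k, h_k : ℤ → ℂ∖{0} satisfy g_k(l+1) = (1+a_k(l)b)·g_k(l) and h_k(l+1) = a_k(l)·h_k(l) for all l ∈ ℤ and k = 1,2,3. Define τ(l,m,s) = ( ∏_{k=1}^{3} g_k(l_k)^m · h_k(l_k)^s ) · b^{−ms} · σ(l,m,s), with integer powers of nonzero complex numbers. Then for each k = 1,2,3 and all (l,m,s) ∈ ℤ⁵: τ(l+e_k,m+1,s)·τ(l,m,s) − τ(l+e_k,m,s)·τ(l,m+1,s) = τ(l+e_k,m,s+1)·τ(l,m+1,s−1).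 -/
/-!
The gauge factor is a product of pieces of the form `x^m y^s`, one per direction, and `b^{-ms}`.
In each of the three products `τ(l+e_k,m+1,s)τ(l,m,s)`, `τ(l+e_k,m,s)τ(l,m+1,s)` and
`τ(l+e_k,m,s+1)τ(l,m+1,s-1)` these pieces contribute the same factor up to a constant: the
transverse directions contribute none, direction `k` contributes `g_k(l_k+1)/g_k(l_k) = 1+a_k b`
to the first and `h_k(l_k+1)/h_k(l_k) = a_k` to the third, and `b^{-ms}` contributes `b` to the
third. So the gauge turns the coefficients `(1+a_k b, a_k b)` of the equation for `σ` into `(1, 1)`.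
-/

variable {K : Type*} [Field K]

/-- `f` and `f'` stand for a solution at `l + e_k` and at `l`, as functions of `(m, s)`. -/
def todaBilinear (α β : K) (f f' : ℤ → ℤ → K) (m s : ℤ) : K :=
  α * f (m+1) s * f' m s - f m s * f' (m+1) s - β * f m (s+1) * f' (m+1) (s-1)

/-- Multiplying `f, f'` by `E, E'` rescales the three terms of `todaBilinear` by `α, 1, β`
relative to each other. -/
def IsTodaGauge (E E' : ℤ → ℤ → K) (α β : K) : Prop :=
  ∀ m s, E (m+1) s * E' m s = α * (E m s * E' (m+1) s) ∧
    E m (s+1) * E' (m+1) (s-1) = β * (E m s * E' (m+1) s)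

theorem todaBilinear_mul {E E' : ℤ → ℤ → K} {α' β' : K} (hE : IsTodaGauge E E' α' β')
    (α β : K) (f f' : ℤ → ℤ → K) (m s : ℤ) :
    todaBilinear α β (E * f) (E' * f') m s
      = E m s * E' (m+1) s * todaBilinear (α * α') (β * β') f f' m s := by
  obtain ⟨h₁, h₂⟩ := hE m s
  unfold todaBilinear
  simp only [Pi.mul_apply]
  linear_combination (α * f (m+1) s * f' m s) * h₁ - (β * f m (s+1) * f' (m+1) (s-1)) * h₂

theorem IsTodaGauge.mul {E E' F F' : ℤ → ℤ → K} {α β γ δ : K} (hE : IsTodaGauge E E' α β)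
    (hF : IsTodaGauge F F' γ δ) : IsTodaGauge (E * F) (E' * F') (α * γ) (β * δ) := by
  intro m s
  obtain ⟨hE₁, hE₂⟩ := hE m s
  obtain ⟨hF₁, hF₂⟩ := hF m s
  simp only [Pi.mul_apply]
  constructor
  · linear_combination (F (m+1) s * F' m s) * hE₁ + (α * E m s * E' (m+1) s) * hF₁
  · linear_combination (F m (s+1) * F' (m+1) (s-1)) * hE₂ + (β * E m s * E' (m+1) s) * hF₂

theorem isTodaGauge_monomial {x x' y y' α β : K} (hx : x ≠ 0) (hx' : x' ≠ 0) (hy : y ≠ 0)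
    (hy' : y' ≠ 0) (hxα : x = α * x') (hyβ : y = β * y') :
    IsTodaGauge (fun m s => x ^ m * y ^ s) (fun m s => x' ^ m * y' ^ s) α β := by
  intro m s
  have hy's : y' ^ s = y' ^ (s-1) * y' := by rw [← zpow_add_one₀ hy', sub_add_cancel]
  dsimp only
  refine ⟨?_, ?_⟩
  · rw [zpow_add_one₀ hx, zpow_add_one₀ hx']
    linear_combination (x ^ m * x' ^ m * y ^ s * y' ^ s) * hxα
  · rw [zpow_add_one₀ hy, zpow_add_one₀ hx', hy's]
    linear_combination (x ^ m * x' ^ m * x' * y ^ s * y' ^ (s-1)) * hyβ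

theorem isTodaGauge_monomial_self {x y : K} (hx : x ≠ 0) (hy : y ≠ 0) :
    IsTodaGauge (fun m s => x ^ m * y ^ s) (fun m s => x ^ m * y ^ s) 1 1 :=
  isTodaGauge_monomial hx hx hy hy (one_mul x).symm (one_mul y).symm

theorem isTodaGauge_zpow_neg_mul {b : K} (hb : b ≠ 0) :
    IsTodaGauge (fun m s => b ^ (-(m * s))) (fun m s => b ^ (-(m * s))) 1 b := by
  intro m s
  dsimp only
  refine ⟨by ring, ?_⟩
  rw [← zpow_add₀ hb, ← zpow_add₀ hb, ← zpow_one_add₀ hb]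
  ring_nf

theorem toda_of_gauge_transform {a b g g' h h' : K} (hb : b ≠ 0) (hg : g ≠ 0) (hg' : g' ≠ 0)
    (hh : h ≠ 0) (hh' : h' ≠ 0) (hgg' : g' = (1 + a * b) * g) (hhh' : h' = a * h) {G : ℤ → ℤ → K}
    (hG : IsTodaGauge G G 1 1) {σA σB τA τB : ℤ → ℤ → K}
    (hσ : ∀ m s, (1 + a * b) * σA (m+1) s * σB m s - σA m s * σB (m+1) s
      = a * b * σA m (s+1) * σB (m+1) (s-1))
    (hτA : ∀ m s, τA m s = g' ^ m * h' ^ s * G m s * b ^ (-(m * s)) * σA m s)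
    (hτB : ∀ m s, τB m s = g ^ m * h ^ s * G m s * b ^ (-(m * s)) * σB m s) (m s : ℤ) :
    τA (m+1) s * τB m s - τA m s * τB (m+1) s = τA m (s+1) * τB (m+1) (s-1) := by
  have hE := ((isTodaGauge_monomial hg' hg hh' hh hgg' hhh').mul hG).mul
    (isTodaGauge_zpow_neg_mul hb)
  have key := todaBilinear_mul hE 1 1 σA σB m s
  simp only [todaBilinear, Pi.mul_apply] at key
  simp only [hτA, hτB]
  linear_combination key + (g' ^ m * h' ^ s * G m s * b ^ (-(m * s))
    * (g ^ (m+1) * h ^ s * G (m+1) s * b ^ (-((m+1) * s)))) * hσ m s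

theorem stmt_3_general (b : ℂ) (hb : b ≠ 0) (a₁ a₂ a₃ : ℤ → ℂ)
    (σ : ℤ → ℤ → ℤ → ℤ → ℤ → ℂ)
    (hσ1 : ∀ l₁ l₂ l₃ m s : ℤ,
      (1 + a₁ l₁ * b) * σ (l₁+1) l₂ l₃ (m+1) s * σ l₁ l₂ l₃ m s
          - σ (l₁+1) l₂ l₃ m s * σ l₁ l₂ l₃ (m+1) s
        = a₁ l₁ * b * σ (l₁+1) l₂ l₃ m (s+1) * σ l₁ l₂ l₃ (m+1) (s-1))
    (hσ2 : ∀ l₁ l₂ l₃ m s : ℤ,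
      (1 + a₂ l₂ * b) * σ l₁ (l₂+1) l₃ (m+1) s * σ l₁ l₂ l₃ m s
          - σ l₁ (l₂+1) l₃ m s * σ l₁ l₂ l₃ (m+1) s
        = a₂ l₂ * b * σ l₁ (l₂+1) l₃ m (s+1) * σ l₁ l₂ l₃ (m+1) (s-1))
    (hσ3 : ∀ l₁ l₂ l₃ m s : ℤ,
      (1 + a₃ l₃ * b) * σ l₁ l₂ (l₃+1) (m+1) s * σ l₁ l₂ l₃ m s
          - σ l₁ l₂ (l₃+1) m s * σ l₁ l₂ l₃ (m+1) s
        = a₃ l₃ * b * σ l₁ l₂ (l₃+1) m (s+1) * σ l₁ l₂ l₃ (m+1) (s-1))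
    (g₁ g₂ g₃ h₁ h₂ h₃ : ℤ → ℂ)
    (hg0 : ∀ l : ℤ, g₁ l ≠ 0 ∧ g₂ l ≠ 0 ∧ g₃ l ≠ 0)
    (hh0 : ∀ l : ℤ, h₁ l ≠ 0 ∧ h₂ l ≠ 0 ∧ h₃ l ≠ 0)
    (hg1 : ∀ l : ℤ, g₁ (l+1) = (1 + a₁ l * b) * g₁ l)
    (hg2 : ∀ l : ℤ, g₂ (l+1) = (1 + a₂ l * b) * g₂ l)
    (hg3 : ∀ l : ℤ, g₃ (l+1) = (1 + a₃ l * b) * g₃ l)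
    (hh1 : ∀ l : ℤ, h₁ (l+1) = a₁ l * h₁ l)
    (hh2 : ∀ l : ℤ, h₂ (l+1) = a₂ l * h₂ l)
    (hh3 : ∀ l : ℤ, h₃ (l+1) = a₃ l * h₃ l)
    (τ : ℤ → ℤ → ℤ → ℤ → ℤ → ℂ)
    (hτ : ∀ l₁ l₂ l₃ m s : ℤ,
      τ l₁ l₂ l₃ m s
        = (g₁ l₁ ^ m * h₁ l₁ ^ s) * (g₂ l₂ ^ m * h₂ l₂ ^ s) * (g₃ l₃ ^ m * h₃ l₃ ^ s)
            * b ^ (-(m * s)) * σ l₁ l₂ l₃ m s) :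
    ∀ l₁ l₂ l₃ m s : ℤ,
      (τ (l₁+1) l₂ l₃ (m+1) s * τ l₁ l₂ l₃ m s - τ (l₁+1) l₂ l₃ m s * τ l₁ l₂ l₃ (m+1) s
          = τ (l₁+1) l₂ l₃ m (s+1) * τ l₁ l₂ l₃ (m+1) (s-1))
      ∧ (τ l₁ (l₂+1) l₃ (m+1) s * τ l₁ l₂ l₃ m s - τ l₁ (l₂+1) l₃ m s * τ l₁ l₂ l₃ (m+1) s
          = τ l₁ (l₂+1) l₃ m (s+1) * τ l₁ l₂ l₃ (m+1) (s-1))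
      ∧ (τ l₁ l₂ (l₃+1) (m+1) s * τ l₁ l₂ l₃ m s - τ l₁ l₂ (l₃+1) m s * τ l₁ l₂ l₃ (m+1) s
          = τ l₁ l₂ (l₃+1) m (s+1) * τ l₁ l₂ l₃ (m+1) (s-1)) := by
  intro l₁ l₂ l₃ m s
  have transverse {x y x' y' : ℂ} (hx : x ≠ 0) (hy : y ≠ 0) (hx' : x' ≠ 0) (hy' : y' ≠ 0) :
      IsTodaGauge ((fun m s : ℤ => x ^ m * y ^ s) * fun m s : ℤ => x' ^ m * y' ^ s)
        ((fun m s : ℤ => x ^ m * y ^ s) * fun m s : ℤ => x' ^ m * y' ^ s) 1 1 := by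
    simpa only [mul_one] using (isTodaGauge_monomial_self hx hy).mul
      (isTodaGauge_monomial_self hx' hy')
  refine ⟨toda_of_gauge_transform hb (hg0 l₁).1 (hg0 (l₁+1)).1 (hh0 l₁).1 (hh0 (l₁+1)).1
      (hg1 l₁) (hh1 l₁) (transverse (hg0 l₂).2.1 (hh0 l₂).2.1 (hg0 l₃).2.2 (hh0 l₃).2.2)
      (hσ1 l₁ l₂ l₃) (τA := τ (l₁+1) l₂ l₃) (τB := τ l₁ l₂ l₃) ?_ ?_ m s,
    toda_of_gauge_transform hb (hg0 l₂).2.1 (hg0 (l₂+1)).2.1 (hh0 l₂).2.1 (hh0 (l₂+1)).2.1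
      (hg2 l₂) (hh2 l₂) (transverse (hg0 l₁).1 (hh0 l₁).1 (hg0 l₃).2.2 (hh0 l₃).2.2)
      (hσ2 l₁ l₂ l₃) (τA := τ l₁ (l₂+1) l₃) (τB := τ l₁ l₂ l₃) ?_ ?_ m s,
    toda_of_gauge_transform hb (hg0 l₃).2.2 (hg0 (l₃+1)).2.2 (hh0 l₃).2.2 (hh0 (l₃+1)).2.2
      (hg3 l₃) (hh3 l₃) (transverse (hg0 l₁).1 (hh0 l₁).1 (hg0 l₂).2.1 (hh0 l₂).2.1)
      (hσ3 l₁ l₂ l₃) (τA := τ l₁ l₂ (l₃+1)) (τB := τ l₁ l₂ l₃) ?_ ?_ m s⟩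
  all_goals
    intro m s
    simp only [hτ, Pi.mul_apply]
    ring

/-- Multiplying a solution `σ` of the bilinear equations with coefficients by the gauge factor
`(∏ₖ gₖ(lₖ)^m hₖ(lₖ)^s) b^{-ms}` yields a solution `τ` of the bilinear discrete
two-dimensional Toda lattice equations without coefficients. -/
theorem stmt_3 (b : ℂ) (hb : b ≠ 0) (a₁ a₂ a₃ : ℤ → ℂ)
    (ha : ∀ l : ℤ, a₁ l ≠ 0 ∧ a₂ l ≠ 0 ∧ a₃ l ≠ 0)
    (hab : ∀ l : ℤ, 1 + a₁ l * b ≠ 0 ∧ 1 + a₂ l * b ≠ 0 ∧ 1 + a₃ l * b ≠ 0)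
    (σ : ℤ → ℤ → ℤ → ℤ → ℤ → ℂ)
    (hσ1 : ∀ l₁ l₂ l₃ m s : ℤ,
      (1 + a₁ l₁ * b) * σ (l₁+1) l₂ l₃ (m+1) s * σ l₁ l₂ l₃ m s
          - σ (l₁+1) l₂ l₃ m s * σ l₁ l₂ l₃ (m+1) s
        = a₁ l₁ * b * σ (l₁+1) l₂ l₃ m (s+1) * σ l₁ l₂ l₃ (m+1) (s-1))
    (hσ2 : ∀ l₁ l₂ l₃ m s : ℤ,
      (1 + a₂ l₂ * b) * σ l₁ (l₂+1) l₃ (m+1) s * σ l₁ l₂ l₃ m s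
          - σ l₁ (l₂+1) l₃ m s * σ l₁ l₂ l₃ (m+1) s
        = a₂ l₂ * b * σ l₁ (l₂+1) l₃ m (s+1) * σ l₁ l₂ l₃ (m+1) (s-1))
    (hσ3 : ∀ l₁ l₂ l₃ m s : ℤ,
      (1 + a₃ l₃ * b) * σ l₁ l₂ (l₃+1) (m+1) s * σ l₁ l₂ l₃ m s
          - σ l₁ l₂ (l₃+1) m s * σ l₁ l₂ l₃ (m+1) s
        = a₃ l₃ * b * σ l₁ l₂ (l₃+1) m (s+1) * σ l₁ l₂ l₃ (m+1) (s-1))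
    (g₁ g₂ g₃ h₁ h₂ h₃ : ℤ → ℂ)
    (hg0 : ∀ l : ℤ, g₁ l ≠ 0 ∧ g₂ l ≠ 0 ∧ g₃ l ≠ 0)
    (hh0 : ∀ l : ℤ, h₁ l ≠ 0 ∧ h₂ l ≠ 0 ∧ h₃ l ≠ 0)
    (hg1 : ∀ l : ℤ, g₁ (l+1) = (1 + a₁ l * b) * g₁ l)
    (hg2 : ∀ l : ℤ, g₂ (l+1) = (1 + a₂ l * b) * g₂ l)
    (hg3 : ∀ l : ℤ, g₃ (l+1) = (1 + a₃ l * b) * g₃ l)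
    (hh1 : ∀ l : ℤ, h₁ (l+1) = a₁ l * h₁ l)
    (hh2 : ∀ l : ℤ, h₂ (l+1) = a₂ l * h₂ l)
    (hh3 : ∀ l : ℤ, h₃ (l+1) = a₃ l * h₃ l)
    (τ : ℤ → ℤ → ℤ → ℤ → ℤ → ℂ)
    (hτ : ∀ l₁ l₂ l₃ m s : ℤ,
      τ l₁ l₂ l₃ m s
        = (g₁ l₁ ^ m * h₁ l₁ ^ s) * (g₂ l₂ ^ m * h₂ l₂ ^ s) * (g₃ l₃ ^ m * h₃ l₃ ^ s)
            * b ^ (-(m * s)) * σ l₁ l₂ l₃ m s) :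
    ∀ l₁ l₂ l₃ m s : ℤ,
      (τ (l₁+1) l₂ l₃ (m+1) s * τ l₁ l₂ l₃ m s - τ (l₁+1) l₂ l₃ m s * τ l₁ l₂ l₃ (m+1) s
          = τ (l₁+1) l₂ l₃ m (s+1) * τ l₁ l₂ l₃ (m+1) (s-1))
      ∧ (τ l₁ (l₂+1) l₃ (m+1) s * τ l₁ l₂ l₃ m s - τ l₁ (l₂+1) l₃ m s * τ l₁ l₂ l₃ (m+1) s
          = τ l₁ (l₂+1) l₃ m (s+1) * τ l₁ l₂ l₃ (m+1) (s-1))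
      ∧ (τ l₁ l₂ (l₃+1) (m+1) s * τ l₁ l₂ l₃ m s - τ l₁ l₂ (l₃+1) m s * τ l₁ l₂ l₃ (m+1) s
          = τ l₁ l₂ (l₃+1) m (s+1) * τ l₁ l₂ l₃ (m+1) (s-1)) :=
  stmt_3_general b hb a₁ a₂ a₃ σ hσ1 hσ2 hσ3 g₁ g₂ g₃ h₁ h₂ h₃ hg0 hh0 hg1 hg2 hg3 hh1 hh2 hh3 τ hτ
end

section
/- Let z : ℤ³ → ℂ satisfy z(p) ≠ z(q) whenever p,q ∈ ℤ³, p ≠ q and every component of p−q lies in {−1,0,1}. Suppose z satisfies, at every (l₁,l₂,l₃) ∈ ℤ³, the discrete Schwarzian KP equation in product form, and in addition the two conditions (in product form): (z_{l₁+1,l₂,l₃}−z_{l₁+1,l₂+1,l₃})(z_{l₁,l₂+1,l₃}−z_{l₁,l₂+1,l₃−1})(z_{l₁,l₂,l₃−1}−z_{l₁+1,l₂,l₃−1}) = −(z_{l₁+1,l₂+1,l₃}−z_{l₁,l₂+1,l₃})(z_{l₁,l₂+1,l₃−1}−z_{l₁,l₂,l₃−1})(z_{l₁+1,l₂,l₃−1}−z_{l₁+1,l₂,l₃})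 and (z_{l₁+1,l₂,l₃}−z_{l₁+1,l₂−1,l₃})(z_{l₁,l₂−1,l₃}−z_{l₁,l₂−1,l₃+1})(z_{l₁,l₂,l₃+1}−z_{l₁+1,l₂,l₃+1}) = −(z_{l₁+1,l₂−1,l₃}−z_{l₁,l₂−1,l₃})(z_{l₁,l₂−1,l₃+1}−z_{l₁,l₂,l₃+1})(z_{l₁+1,l₂,l₃+1}−z_{l₁+1,l₂,l₃}). Then for each fixed l₃, the cross-ratio X(l₁,l₂) = ((z(l₁,l₂,l₃)−z(l₁+1,l₂,l₃))(z(l₁+1,l₂+1,l₃)−z(l₁,l₂+1,l₃))) / ((z(l₁+1,l₂,l₃)−z(l₁+1,l₂+1,l₃))(z(l₁,l₂+1,l₃)−z(l₁,l₂,l₃))) satisfies X(l₁+1,l₂+1)·X(l₁,l₂) = X(l₁+1,l₂)·X(l₁,l₂+1) for all (l₁,l₂) ∈ ℤ²; consequently there exist functions λ, μ : ℤ → ℂ∖{0} such that X(l₁,l₂) = λ(l₁)/μ(l₂), i.e. z (with l₃ fixed) satisfies the discrete Schwarzian KdV equation. -/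
/-!
On a unit cube of the lattice, each main diagonal leaves a hexagon of six vertices, and the dSKP
relation on that hexagon says that at an endpoint `o` of the diagonal the cross-ratio of the
horizontal face through `o` is the quotient of the cross-ratios of the two vertical faces through
`o`: in the product of the three cross-ratios the factors containing `o` cancel. The dSKP equation
and the two reduction conditions are these relations for three of the four diagonals, read at the
vertices `000`, `010` and `110` of the bottom face. Comparing them, the cross-ratio of the vertical
faces in direction 1 does not depend on `l₂` and that of the vertical faces in direction 2 does not
depend on `l₁`, so `X(l₁, l₂) = λ(l₁) / μ(l₂)`, which implies the multiplicative relation.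
-/

section

variable {K : Type*} [Field K]

def crossRatio (a b c d : K) : K := (a - b) * (c - d) / ((b - c) * (d - a))

theorem crossRatio_ne_zero {a b c d : K} (hab : a ≠ b) (hbc : b ≠ c) (hcd : c ≠ d)
    (hda : d ≠ a) : crossRatio a b c d ≠ 0 :=
  div_ne_zero (mul_ne_zero (sub_ne_zero.2 hab) (sub_ne_zero.2 hcd))
    (mul_ne_zero (sub_ne_zero.2 hbc) (sub_ne_zero.2 hda))

theorem crossRatio_badc (a b c d : K) : crossRatio b a d c = crossRatio a b c d := by
  unfold crossRatio
  rw [show (b - a) * (d - c) = (a - b) * (c - d) by ring,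
    show (a - d) * (c - b) = (b - c) * (d - a) by ring]

theorem crossRatio_cdab (a b c d : K) : crossRatio c d a b = crossRatio a b c d := by
  unfold crossRatio
  rw [mul_comm (c - d), mul_comm (d - a)]

theorem crossRatio_dcba (a b c d : K) : crossRatio d c b a = crossRatio a b c d := by
  rw [← crossRatio_cdab, crossRatio_badc]

def DSKPHexagon (a₁ a₂ a₃ a₄ a₅ a₆ : K) : Prop :=
  (a₁ - a₂) * (a₃ - a₄) * (a₅ - a₆) = -((a₂ - a₃) * (a₄ - a₅) * (a₆ - a₁))

namespace DSKPHexagon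

variable {a₁ a₂ a₃ a₄ a₅ a₆ : K}

theorem rotate (h : DSKPHexagon a₁ a₂ a₃ a₄ a₅ a₆) : DSKPHexagon a₂ a₃ a₄ a₅ a₆ a₁ := by
  unfold DSKPHexagon at *
  linear_combination h

theorem crossRatio_eq_div {o a b c ab bc ca : K} (h : DSKPHexagon a ab b bc c ca)
    (hob : o ≠ b) (hoc : o ≠ c) (haab : a ≠ ab) (haca : a ≠ ca) (hbcc : bc ≠ c) :
    crossRatio o a ab b = crossRatio o a ca c / crossRatio o b bc c := by
  unfold crossRatio DSKPHexagon at *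
  field_simp
  linear_combination (o - a) * (b - o) * h

end DSKPHexagon

section Lattice

def InjectiveOnUnitCubes (z : ℤ → ℤ → ℤ → K) : Prop :=
  ∀ p q : ℤ × ℤ × ℤ, p ≠ q → |p.1 - q.1| ≤ 1 → |p.2.1 - q.2.1| ≤ 1 → |p.2.2 - q.2.2| ≤ 1 →
    z p.1 p.2.1 p.2.2 ≠ z q.1 q.2.1 q.2.2

def faceCrossRatio₁₂ (z : ℤ → ℤ → ℤ → K) (l₁ l₂ l₃ : ℤ) : K :=
  crossRatio (z l₁ l₂ l₃) (z (l₁+1) l₂ l₃) (z (l₁+1) (l₂+1) l₃) (z l₁ (l₂+1) l₃)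

def faceCrossRatio₁₃ (z : ℤ → ℤ → ℤ → K) (l₁ l₂ l₃ : ℤ) : K :=
  crossRatio (z l₁ l₂ l₃) (z (l₁+1) l₂ l₃) (z (l₁+1) l₂ (l₃+1)) (z l₁ l₂ (l₃+1))

def faceCrossRatio₂₃ (z : ℤ → ℤ → ℤ → K) (l₁ l₂ l₃ : ℤ) : K :=
  crossRatio (z l₁ l₂ l₃) (z l₁ (l₂+1) l₃) (z l₁ (l₂+1) (l₃+1)) (z l₁ l₂ (l₃+1))

variable {z : ℤ → ℤ → ℤ → K} {l₁ l₂ l₃ : ℤ}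

theorem faceCrossRatio₁₃_ne_zero (hz : InjectiveOnUnitCubes z) :
    faceCrossRatio₁₃ z l₁ l₂ l₃ ≠ 0 := by
  refine crossRatio_ne_zero ?_ ?_ ?_ ?_ <;> apply hz (_, _, _) (_, _, _) <;> simp

theorem faceCrossRatio₂₃_ne_zero (hz : InjectiveOnUnitCubes z) :
    faceCrossRatio₂₃ z l₁ l₂ l₃ ≠ 0 := by
  refine crossRatio_ne_zero ?_ ?_ ?_ ?_ <;> apply hz (_, _, _) (_, _, _) <;> simp

theorem faceCrossRatio₁₂_eq_div (hz : InjectiveOnUnitCubes z)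
    (h : DSKPHexagon (z (l₁+1) l₂ l₃) (z (l₁+1) (l₂+1) l₃) (z l₁ (l₂+1) l₃)
      (z l₁ (l₂+1) (l₃+1)) (z l₁ l₂ (l₃+1)) (z (l₁+1) l₂ (l₃+1))) :
    faceCrossRatio₁₂ z l₁ l₂ l₃ = faceCrossRatio₁₃ z l₁ l₂ l₃ / faceCrossRatio₂₃ z l₁ l₂ l₃ := by
  refine h.crossRatio_eq_div ?_ ?_ ?_ ?_ ?_ <;>
    apply hz (_, _, _) (_, _, _) <;> simp

theorem faceCrossRatio₁₂_eq_succ₂_div (hz : InjectiveOnUnitCubes z)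
    (h : DSKPHexagon (z (l₁+1) (l₂+1) l₃) (z (l₁+1) l₂ l₃) (z l₁ l₂ l₃)
      (z l₁ l₂ (l₃+1)) (z l₁ (l₂+1) (l₃+1)) (z (l₁+1) (l₂+1) (l₃+1))) :
    faceCrossRatio₁₂ z l₁ l₂ l₃
      = faceCrossRatio₁₃ z l₁ (l₂+1) l₃ / faceCrossRatio₂₃ z l₁ l₂ l₃ := by
  rw [faceCrossRatio₁₂, faceCrossRatio₂₃, ← crossRatio_dcba (z l₁ l₂ l₃) (z (l₁+1) l₂ l₃),
    ← crossRatio_badc (z l₁ l₂ l₃) (z l₁ (l₂+1) l₃)]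
  refine h.crossRatio_eq_div ?_ ?_ ?_ ?_ ?_ <;>
    apply hz (_, _, _) (_, _, _) <;> simp

theorem faceCrossRatio₁₂_eq_succ₂_div_succ₁ (hz : InjectiveOnUnitCubes z)
    (h : DSKPHexagon (z (l₁+1) l₂ (l₃+1)) (z (l₁+1) (l₂+1) (l₃+1)) (z l₁ (l₂+1) (l₃+1))
      (z l₁ (l₂+1) l₃) (z l₁ l₂ l₃) (z (l₁+1) l₂ l₃)) :
    faceCrossRatio₁₂ z l₁ l₂ l₃
      = faceCrossRatio₁₃ z l₁ (l₂+1) l₃ / faceCrossRatio₂₃ z (l₁+1) l₂ l₃ := by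
  rw [faceCrossRatio₁₂, faceCrossRatio₁₃, faceCrossRatio₂₃,
    ← crossRatio_cdab (z l₁ l₂ l₃), ← crossRatio_badc (z l₁ (l₂+1) l₃),
    ← crossRatio_badc (z (l₁+1) l₂ l₃)]
  refine h.rotate.rotate.rotate.crossRatio_eq_div ?_ ?_ ?_ ?_ ?_ <;>
    apply hz (_, _, _) (_, _, _) <;> simp

theorem faceCrossRatio₁₃_succ₂ (hz : InjectiveOnUnitCubes z)
    (hdSKP : ∀ l₁ l₂ l₃ : ℤ, DSKPHexagon (z (l₁+1) l₂ l₃) (z (l₁+1) (l₂+1) l₃) (z l₁ (l₂+1) l₃)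
      (z l₁ (l₂+1) (l₃+1)) (z l₁ l₂ (l₃+1)) (z (l₁+1) l₂ (l₃+1)))
    (hred₂ : ∀ l₁ l₂ l₃ : ℤ, DSKPHexagon (z (l₁+1) l₂ l₃) (z (l₁+1) (l₂-1) l₃) (z l₁ (l₂-1) l₃)
      (z l₁ (l₂-1) (l₃+1)) (z l₁ l₂ (l₃+1)) (z (l₁+1) l₂ (l₃+1))) :
    faceCrossRatio₁₃ z l₁ (l₂+1) l₃ = faceCrossRatio₁₃ z l₁ l₂ l₃ := by
  have h := hred₂ l₁ (l₂+1) l₃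
  simp only [add_sub_cancel_right] at h
  exact (div_left_inj' (faceCrossRatio₂₃_ne_zero hz)).1
    ((faceCrossRatio₁₂_eq_succ₂_div hz h).symm.trans (faceCrossRatio₁₂_eq_div hz (hdSKP l₁ l₂ l₃)))

theorem faceCrossRatio₂₃_succ₁ (hz : InjectiveOnUnitCubes z)
    (hred₁ : ∀ l₁ l₂ l₃ : ℤ, DSKPHexagon (z (l₁+1) l₂ l₃) (z (l₁+1) (l₂+1) l₃) (z l₁ (l₂+1) l₃)
      (z l₁ (l₂+1) (l₃-1)) (z l₁ l₂ (l₃-1)) (z (l₁+1) l₂ (l₃-1)))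
    (hred₂ : ∀ l₁ l₂ l₃ : ℤ, DSKPHexagon (z (l₁+1) l₂ l₃) (z (l₁+1) (l₂-1) l₃) (z l₁ (l₂-1) l₃)
      (z l₁ (l₂-1) (l₃+1)) (z l₁ l₂ (l₃+1)) (z (l₁+1) l₂ (l₃+1))) :
    faceCrossRatio₂₃ z (l₁+1) l₂ l₃ = faceCrossRatio₂₃ z l₁ l₂ l₃ := by
  have h₁ := hred₁ l₁ l₂ (l₃+1)
  have h₂ := hred₂ l₁ (l₂+1) l₃
  simp only [add_sub_cancel_right] at h₁ h₂
  have h := (faceCrossRatio₁₂_eq_succ₂_div_succ₁ hz h₁).symm.trans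
    (faceCrossRatio₁₂_eq_succ₂_div hz h₂)
  rwa [div_eq_mul_inv, div_eq_mul_inv, mul_right_inj' (faceCrossRatio₁₃_ne_zero hz), inv_inj] at h

end Lattice

end

/-- Reduction from the discrete Schwarzian KP equation to the discrete Schwarzian KdV
equation: if `z : ℤ³ → ℂ` takes distinct values at distinct nearby lattice points, satisfies
dSKP in product form and the two additional reduction conditions, then for each fixed `l₃` the
cross-ratio `X` satisfies `X(l₁+1,l₂+1) X(l₁,l₂) = X(l₁+1,l₂) X(l₁,l₂+1)`, and hence separates
as `X(l₁,l₂) = λ(l₁)/μ(l₂)`, i.e. `z` satisfies the discrete Schwarzian KdV equation. -/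
theorem stmt_5 (z : ℤ → ℤ → ℤ → ℂ)
    (hsep : ∀ p q : ℤ × ℤ × ℤ, p ≠ q →
      |p.1 - q.1| ≤ 1 → |p.2.1 - q.2.1| ≤ 1 → |p.2.2 - q.2.2| ≤ 1 →
      z p.1 p.2.1 p.2.2 ≠ z q.1 q.2.1 q.2.2)
    (hdSKP : ∀ l₁ l₂ l₃ : ℤ,
      (z (l₁+1) l₂ l₃ - z (l₁+1) (l₂+1) l₃) * (z l₁ (l₂+1) l₃ - z l₁ (l₂+1) (l₃+1))
          * (z l₁ l₂ (l₃+1) - z (l₁+1) l₂ (l₃+1))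
        = -((z (l₁+1) (l₂+1) l₃ - z l₁ (l₂+1) l₃) * (z l₁ (l₂+1) (l₃+1) - z l₁ l₂ (l₃+1))
            * (z (l₁+1) l₂ (l₃+1) - z (l₁+1) l₂ l₃)))
    (hred1 : ∀ l₁ l₂ l₃ : ℤ,
      (z (l₁+1) l₂ l₃ - z (l₁+1) (l₂+1) l₃) * (z l₁ (l₂+1) l₃ - z l₁ (l₂+1) (l₃-1))
          * (z l₁ l₂ (l₃-1) - z (l₁+1) l₂ (l₃-1))
        = -((z (l₁+1) (l₂+1) l₃ - z l₁ (l₂+1) l₃) * (z l₁ (l₂+1) (l₃-1) - z l₁ l₂ (l₃-1))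
            * (z (l₁+1) l₂ (l₃-1) - z (l₁+1) l₂ l₃)))
    (hred2 : ∀ l₁ l₂ l₃ : ℤ,
      (z (l₁+1) l₂ l₃ - z (l₁+1) (l₂-1) l₃) * (z l₁ (l₂-1) l₃ - z l₁ (l₂-1) (l₃+1))
          * (z l₁ l₂ (l₃+1) - z (l₁+1) l₂ (l₃+1))
        = -((z (l₁+1) (l₂-1) l₃ - z l₁ (l₂-1) l₃) * (z l₁ (l₂-1) (l₃+1) - z l₁ l₂ (l₃+1))
            * (z (l₁+1) l₂ (l₃+1) - z (l₁+1) l₂ l₃)))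
    (X : ℤ → ℤ → ℤ → ℂ)
    (hX : ∀ l₃ l₁ l₂ : ℤ,
      X l₃ l₁ l₂ = ((z l₁ l₂ l₃ - z (l₁+1) l₂ l₃) * (z (l₁+1) (l₂+1) l₃ - z l₁ (l₂+1) l₃))
        / ((z (l₁+1) l₂ l₃ - z (l₁+1) (l₂+1) l₃) * (z l₁ (l₂+1) l₃ - z l₁ l₂ l₃))) :
    ∀ l₃ : ℤ,
      (∀ l₁ l₂ : ℤ, X l₃ (l₁+1) (l₂+1) * X l₃ l₁ l₂ = X l₃ (l₁+1) l₂ * X l₃ l₁ (l₂+1))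
      ∧ ∃ lam mu : ℤ → ℂ, (∀ l₁, lam l₁ ≠ 0) ∧ (∀ l₂, mu l₂ ≠ 0)
          ∧ ∀ l₁ l₂ : ℤ, X l₃ l₁ l₂ = lam l₁ / mu l₂ := by
  intro l₃
  have h₁₃ (l₁ l₂ : ℤ) : faceCrossRatio₁₃ z l₁ l₂ l₃ = faceCrossRatio₁₃ z l₁ 0 l₃ := by
    have hper : Function.Periodic (faceCrossRatio₁₃ z l₁ · l₃) 1 :=
      fun _ ↦ faceCrossRatio₁₃_succ₂ hsep hdSKP hred2
    simpa only [Int.cast_id, mul_one] using hper.int_mul_eq l₂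
  have h₂₃ (l₁ l₂ : ℤ) : faceCrossRatio₂₃ z l₁ l₂ l₃ = faceCrossRatio₂₃ z 0 l₂ l₃ := by
    have hper : Function.Periodic (faceCrossRatio₂₃ z · l₂ l₃) 1 :=
      fun _ ↦ faceCrossRatio₂₃_succ₁ hsep hred1 hred2
    simpa only [Int.cast_id, mul_one] using hper.int_mul_eq l₁
  have hsplit (l₁ l₂ : ℤ) :
      X l₃ l₁ l₂ = faceCrossRatio₁₃ z l₁ 0 l₃ / faceCrossRatio₂₃ z 0 l₂ l₃ := by
    rw [hX, ← h₁₃ l₁ l₂, ← h₂₃ l₁ l₂]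
    exact faceCrossRatio₁₂_eq_div hsep (hdSKP l₁ l₂ l₃)
  refine ⟨fun l₁ l₂ ↦ by simp only [hsplit]; ring, _, _,
    fun _ ↦ faceCrossRatio₁₃_ne_zero hsep, fun _ ↦ faceCrossRatio₂₃_ne_zero hsep, hsplit⟩
end

section
/- Let b ∈ ℂ and a₁,a₂ : ℤ → ℂ with a_k(l)·b ≠ 0 and 1+a_k(l)b ≠ 0 for all l ∈ ℤ and k = 1,2. Let σ : ℤ³ → ℂ (arguments (l₁,l₂,s)) be nowhere vanishing and satisfy, for k = 1,2 and all (l₁,l₂,s): (1+a_k(l_k)b)·σ(l+e_k, s+2)·σ(l, s) − σ(l+e_k, s)·σ(l, s+2) = a_k(l_k)·b·σ(l+e_k, s+1)·σ(l, s+1), where l = (l₁,l₂). Let G : ℤ² → ℂ with G(0,0) ≠ 0, G(l₁+1,l₂) = (1+a₁(l₁)b)·G(l₁,l₂) and G(l₁,l₂+1) = (1+a₂(l₂)b)·G(l₁,l₂). Fix s₀ ∈ ℤ and define z(l₁,l₂) = G(l₁,l₂)·σ(l₁,l₂,s₀+2)/σ(l₁,l₂,s₀). Then for all (l₁,l₂)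 ∈ ℤ² the four differences z(l₁,l₂)−z(l₁+1,l₂), z(l₁+1,l₂+1)−z(l₁,l₂+1), z(l₁+1,l₂)−z(l₁+1,l₂+1), z(l₁,l₂+1)−z(l₁,l₂) are nonzero and ((z(l₁,l₂)−z(l₁+1,l₂))(z(l₁+1,l₂+1)−z(l₁,l₂+1))) / ((z(l₁+1,l₂)−z(l₁+1,l₂+1))(z(l₁,l₂+1)−z(l₁,l₂))) = λ(l₁)/μ(l₂), where λ(l₁) = a₁(l₁)²/(1+a₁(l₁)b) and μ(l₂) = a₂(l₂)²/(1+a₂(l₂)b); that is, z satisfies the discrete Schwarzian KdV equation with coefficients λ, μ. -/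
/-!
Each bilinear equation says that the lattice derivative of `z` in direction `k` factorises:
`z(l + e_k) - z(l) = a_k b G(l) σ(l + e_k, s₀+1) σ(l, s₀+1) / (σ(l, s₀) σ(l + e_k, s₀))`.
In the cross-ratio of an elementary square every `σ`-factor then occurs once in the numerator
and once in the denominator, leaving `G(l + e₂) a₁² / (G(l + e₁) a₂²)`, and the gauge relations
for `G` turn this into `λ(l₁)/μ(l₂)`.
-/

theorem Int.ne_zero_of_succ_eq_mul {M₀ : Type*} [MulZeroClass M₀] [NoZeroDivisors M₀]
    {f c : ℤ → M₀} (hc : ∀ n, c n ≠ 0) (hf : ∀ n, f (n + 1) = c n * f n) (h0 : f 0 ≠ 0)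
    (n : ℤ) : f n ≠ 0 := by
  induction n using Int.induction_on with
  | zero => exact h0
  | succ n ih => rw [hf]; exact mul_ne_zero (hc n) ih
  | pred n ih =>
    intro hn
    have h := hf (-n - 1)
    rw [sub_add_cancel, hn, mul_zero] at h
    exact ih h

theorem gauge_ratio_sub {K : Type*} [Field K] {c g p₀ p₁ p₂ q₀ q₁ q₂ : K}
    (hp : p₀ ≠ 0) (hq : q₀ ≠ 0) (h : (1 + c) * q₂ * p₀ - q₀ * p₂ = c * q₁ * p₁) :
    (1 + c) * g * q₂ / q₀ - g * p₂ / p₀ = g * c * q₁ * p₁ / (p₀ * q₀) := by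
  field_simp
  linear_combination g * h

/-- From a nowhere vanishing solution `σ` of the bilinear equations, the gauged ratio
`z = G · σ^{s₀+2}/σ^{s₀}` satisfies the discrete Schwarzian KdV equation with coefficients
`λ(l₁) = a₁(l₁)²/(1+a₁(l₁)b)` and `μ(l₂) = a₂(l₂)²/(1+a₂(l₂)b)`. -/
theorem stmt_7 (b : ℂ) (a₁ a₂ : ℤ → ℂ)
    (ha₁ : ∀ l : ℤ, a₁ l * b ≠ 0) (ha₂ : ∀ l : ℤ, a₂ l * b ≠ 0)
    (hab₁ : ∀ l : ℤ, 1 + a₁ l * b ≠ 0) (hab₂ : ∀ l : ℤ, 1 + a₂ l * b ≠ 0)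
    (σ : ℤ → ℤ → ℤ → ℂ) (hσ0 : ∀ l₁ l₂ s : ℤ, σ l₁ l₂ s ≠ 0)
    (hσ1 : ∀ l₁ l₂ s : ℤ,
      (1 + a₁ l₁ * b) * σ (l₁+1) l₂ (s+2) * σ l₁ l₂ s - σ (l₁+1) l₂ s * σ l₁ l₂ (s+2)
        = a₁ l₁ * b * σ (l₁+1) l₂ (s+1) * σ l₁ l₂ (s+1))
    (hσ2 : ∀ l₁ l₂ s : ℤ,
      (1 + a₂ l₂ * b) * σ l₁ (l₂+1) (s+2) * σ l₁ l₂ s - σ l₁ (l₂+1) s * σ l₁ l₂ (s+2)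
        = a₂ l₂ * b * σ l₁ (l₂+1) (s+1) * σ l₁ l₂ (s+1))
    (G : ℤ → ℤ → ℂ) (hG0 : G 0 0 ≠ 0)
    (hG1 : ∀ l₁ l₂ : ℤ, G (l₁+1) l₂ = (1 + a₁ l₁ * b) * G l₁ l₂)
    (hG2 : ∀ l₁ l₂ : ℤ, G l₁ (l₂+1) = (1 + a₂ l₂ * b) * G l₁ l₂)
    (s₀ : ℤ) (z : ℤ → ℤ → ℂ)
    (hz : ∀ l₁ l₂ : ℤ, z l₁ l₂ = G l₁ l₂ * σ l₁ l₂ (s₀+2) / σ l₁ l₂ s₀) :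
    ∀ l₁ l₂ : ℤ,
      z l₁ l₂ - z (l₁+1) l₂ ≠ 0 ∧ z (l₁+1) (l₂+1) - z l₁ (l₂+1) ≠ 0
      ∧ z (l₁+1) l₂ - z (l₁+1) (l₂+1) ≠ 0 ∧ z l₁ (l₂+1) - z l₁ l₂ ≠ 0
      ∧ ((z l₁ l₂ - z (l₁+1) l₂) * (z (l₁+1) (l₂+1) - z l₁ (l₂+1)))
          / ((z (l₁+1) l₂ - z (l₁+1) (l₂+1)) * (z l₁ (l₂+1) - z l₁ l₂))
        = (a₁ l₁ ^ 2 / (1 + a₁ l₁ * b)) / (a₂ l₂ ^ 2 / (1 + a₂ l₂ * b)) := by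
  have hG : ∀ l₁ l₂, G l₁ l₂ ≠ 0 := fun l₁ l₂ =>
    Int.ne_zero_of_succ_eq_mul (f := (G · l₂)) hab₁ (hG1 · l₂)
      (Int.ne_zero_of_succ_eq_mul hab₂ (hG2 0) hG0 l₂) l₁
  have hΔ₁ : ∀ l₁ l₂, z (l₁+1) l₂ - z l₁ l₂ = G l₁ l₂ * (a₁ l₁ * b)
      * σ (l₁+1) l₂ (s₀+1) * σ l₁ l₂ (s₀+1) / (σ l₁ l₂ s₀ * σ (l₁+1) l₂ s₀) := by
    intro l₁ l₂
    rw [hz, hz, hG1]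
    exact gauge_ratio_sub (hσ0 _ _ _) (hσ0 _ _ _) (hσ1 l₁ l₂ s₀)
  have hΔ₂ : ∀ l₁ l₂, z l₁ (l₂+1) - z l₁ l₂ = G l₁ l₂ * (a₂ l₂ * b)
      * σ l₁ (l₂+1) (s₀+1) * σ l₁ l₂ (s₀+1) / (σ l₁ l₂ s₀ * σ l₁ (l₂+1) s₀) := by
    intro l₁ l₂
    rw [hz, hz, hG2]
    exact gauge_ratio_sub (hσ0 _ _ _) (hσ0 _ _ _) (hσ2 l₁ l₂ s₀)
  have hΔ₁0 : ∀ l₁ l₂, z (l₁+1) l₂ - z l₁ l₂ ≠ 0 := fun l₁ l₂ => by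
    rw [hΔ₁]; simp [hG, hσ0, ha₁ l₁]
  have hΔ₂0 : ∀ l₁ l₂, z l₁ (l₂+1) - z l₁ l₂ ≠ 0 := fun l₁ l₂ => by
    rw [hΔ₂]; simp [hG, hσ0, ha₂ l₂]
  intro l₁ l₂
  rw [← neg_sub (z (l₁+1) l₂), ← neg_sub (z (l₁+1) (l₂+1))]
  refine ⟨neg_ne_zero.2 (hΔ₁0 _ _), hΔ₁0 _ _, neg_ne_zero.2 (hΔ₂0 _ _), hΔ₂0 _ _, ?_⟩
  obtain ⟨ha₁', hb⟩ := mul_ne_zero_iff.1 (ha₁ l₁)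
  have ha₂' := left_ne_zero_of_mul (ha₂ l₂)
  rw [hΔ₁, hΔ₁, hΔ₂, hΔ₂, hG1, hG2]
  field_simp [hG, hσ0, hab₁, hab₂]
end

section
/- Let Q, γ, α₀, α₁, α₂ ∈ ℂ∖{0} and let τ : ℤ³ → ℂ with arguments (n,m,N). (a) If for all (n,m,N): τ(n+1,m,N+1)τ(n,m,N−1) − Q^{m−2n−2N}γ^{−2}α₀^{−3}α₁^{−1}α₂^{−2}·τ(n+1,m+1,N)τ(n,m−1,N) − Q^{4n−2m+4N}γ⁴α₀⁶α₁²α₂⁴·τ(n+1,m,N)τ(n,m,N) = 0 and τ(n,m,N+1)τ(n+1,m,N−1) − Q^{−2n+m+2N}γ²α₀^{−3}α₁^{−1}α₂^{−2}·τ(n,m−1,N)τ(n+1,m+1,N) − Q^{4n−2m−4N}γ^{−4}α₀⁶α₁²α₂⁴·τ(n,m,N)τ(n+1,m,N) = 0, then for all (n,m,N): τ(n,m,N+1)τ(n+1,m,N−1) − Q^{4N}γ⁴·τ(n+1,m,N+1)τ(n,m,N−1) + Q^{4n−2m−4N}γ^{−4}α₀⁶α₁²α₂⁴(Q^{12N}γ^{12}−1)·τ(n+1,m,N)τ(n,m,N)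 = 0. (b) If moreover α₀α₁α₂ = Q and for all (n,m,N): τ(n,m+1,N+1)τ(n,m,N−1) − Q^{n−2m−2N}γ^{−2}α₁^{−1}α₂·τ(n−1,m,N)τ(n+1,m+1,N) − Q^{−2n+4m+4N}γ⁴α₁²α₂^{−2}·τ(n,m+1,N)τ(n,m,N) = 0 and τ(n,m,N+1)τ(n,m+1,N−1) − Q^{n−2m+2N−1}γ²α₀α₂²·τ(n+1,m+1,N)τ(n−1,m,N) − Q^{−2n+4m−4N+2}γ^{−4}α₀^{−2}α₂^{−4}·τ(n,m,N)τ(n,m+1,N) = 0, then for all (n,m,N): τ(n,m,N+1)τ(n,m+1,N−1) − Q^{4N}γ⁴·τ(n,m+1,N+1)τ(n,m,N−1) + Q^{4m−2n−4N}γ^{−4}α₁²α₂^{−2}(Q^{12N}γ^{12}−1)·τ(n,m+1,N)τ(n,m,N) = 0. -/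
/-!
Both identities are `h₂ - Q ^ (4N) γ ^ 4 • h₁` for the corresponding pair of bilinear equations:
with the multiplier `Q ^ (4N) γ ^ 4` the coefficients of the middle products agree (in the
`m`-direction this is exactly the constraint `α₀ α₁ α₂ = Q`), so those products cancel, and the
coefficients of the last products combine into the factor `Q ^ (12N) γ ^ 12 - 1`.
-/

section CoefficientIdentities

variable {Q γ : ℂ} (hQ : Q ≠ 0) (hγ : γ ≠ 0)
include hQ hγ

theorem mid_coeff_eq_n (n m N : ℤ) :
    Q ^ (4*N) * γ ^ (4 : ℤ) * (Q ^ (m - 2*n - 2*N) * γ ^ (-2 : ℤ))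
      = Q ^ (-2*n + m + 2*N) * γ ^ (2 : ℤ) := by
  simp only [zpow_add₀ hQ, zpow_sub₀ hQ, zpow_mul', zpow_neg]
  field_simp

theorem last_coeff_eq_n (n m N : ℤ) :
    Q ^ (4*N) * γ ^ (4 : ℤ) * (Q ^ (4*n - 2*m + 4*N) * γ ^ (4 : ℤ))
        - Q ^ (4*n - 2*m - 4*N) * γ ^ (-4 : ℤ)
      = Q ^ (4*n - 2*m - 4*N) * γ ^ (-4 : ℤ) * (Q ^ (12*N) * γ ^ (12 : ℤ) - 1) := by
  simp only [zpow_add₀ hQ, zpow_sub₀ hQ, zpow_mul', zpow_neg]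
  field_simp

variable {α₀ α₁ α₂ : ℂ} (hα : α₀ * α₁ * α₂ = Q)
include hα

theorem mid_coeff_eq_m (n m N : ℤ) :
    Q ^ (4*N) * γ ^ (4 : ℤ) * (Q ^ (n - 2*m - 2*N) * γ ^ (-2 : ℤ) * α₁ ^ (-1 : ℤ) * α₂)
      = Q ^ (n - 2*m + 2*N - 1) * γ ^ (2 : ℤ) * α₀ * α₂ ^ (2 : ℤ) := by
  have hα₁ : α₁ ≠ 0 := by rintro rfl; simp_all
  simp only [zpow_add₀ hQ, zpow_sub₀ hQ, zpow_mul', zpow_neg]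
  field_simp
  rw [← hα]
  ring

theorem last_coeff_eq_m (n m N : ℤ) :
    Q ^ (4*N) * γ ^ (4 : ℤ) * (Q ^ (-2*n + 4*m + 4*N) * γ ^ (4 : ℤ) * α₁ ^ (2 : ℤ) * α₂ ^ (-2 : ℤ))
        - Q ^ (-2*n + 4*m - 4*N + 2) * γ ^ (-4 : ℤ) * α₀ ^ (-2 : ℤ) * α₂ ^ (-4 : ℤ)
      = Q ^ (4*m - 2*n - 4*N) * γ ^ (-4 : ℤ) * α₁ ^ (2 : ℤ) * α₂ ^ (-2 : ℤ)
          * (Q ^ (12*N) * γ ^ (12 : ℤ) - 1) := by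
  have hα₀ : α₀ ≠ 0 := by rintro rfl; simp_all
  have hα₂ : α₂ ≠ 0 := by rintro rfl; simp_all
  simp only [zpow_add₀ hQ, zpow_sub₀ hQ, zpow_mul', zpow_neg]
  field_simp
  rw [← hα]
  ring

end CoefficientIdentities

theorem stmt_9_general (Q γ α₀ α₁ α₂ : ℂ)
    (hQ : Q ≠ 0) (hγ : γ ≠ 0)
    (τ : ℤ → ℤ → ℤ → ℂ)
    (h1a : ∀ n m N : ℤ,
      τ (n+1) m (N+1) * τ n m (N-1)
        - Q ^ (m - 2*n - 2*N) * γ ^ (-2 : ℤ) * α₀ ^ (-3 : ℤ) * α₁ ^ (-1 : ℤ) * α₂ ^ (-2 : ℤ)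
            * (τ (n+1) (m+1) N * τ n (m-1) N)
        - Q ^ (4*n - 2*m + 4*N) * γ ^ (4 : ℤ) * α₀ ^ (6 : ℤ) * α₁ ^ (2 : ℤ) * α₂ ^ (4 : ℤ)
            * (τ (n+1) m N * τ n m N) = 0)
    (h2a : ∀ n m N : ℤ,
      τ n m (N+1) * τ (n+1) m (N-1)
        - Q ^ (-2*n + m + 2*N) * γ ^ (2 : ℤ) * α₀ ^ (-3 : ℤ) * α₁ ^ (-1 : ℤ) * α₂ ^ (-2 : ℤ)
            * (τ n (m-1) N * τ (n+1) (m+1) N)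
        - Q ^ (4*n - 2*m - 4*N) * γ ^ (-4 : ℤ) * α₀ ^ (6 : ℤ) * α₁ ^ (2 : ℤ) * α₂ ^ (4 : ℤ)
            * (τ n m N * τ (n+1) m N) = 0) :
    (∀ n m N : ℤ,
      τ n m (N+1) * τ (n+1) m (N-1)
        - Q ^ (4*N) * γ ^ (4 : ℤ) * (τ (n+1) m (N+1) * τ n m (N-1))
        + Q ^ (4*n - 2*m - 4*N) * γ ^ (-4 : ℤ) * α₀ ^ (6 : ℤ) * α₁ ^ (2 : ℤ) * α₂ ^ (4 : ℤ)
            * (Q ^ (12*N) * γ ^ (12 : ℤ) - 1) * (τ (n+1) m N * τ n m N) = 0)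
    ∧ (α₀ * α₁ * α₂ = Q →
      (∀ n m N : ℤ,
        τ n (m+1) (N+1) * τ n m (N-1)
          - Q ^ (n - 2*m - 2*N) * γ ^ (-2 : ℤ) * α₁ ^ (-1 : ℤ) * α₂
              * (τ (n-1) m N * τ (n+1) (m+1) N)
          - Q ^ (-2*n + 4*m + 4*N) * γ ^ (4 : ℤ) * α₁ ^ (2 : ℤ) * α₂ ^ (-2 : ℤ)
              * (τ n (m+1) N * τ n m N) = 0) →
      (∀ n m N : ℤ,
        τ n m (N+1) * τ n (m+1) (N-1)
          - Q ^ (n - 2*m + 2*N - 1) * γ ^ (2 : ℤ) * α₀ * α₂ ^ (2 : ℤ)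
              * (τ (n+1) (m+1) N * τ (n-1) m N)
          - Q ^ (-2*n + 4*m - 4*N + 2) * γ ^ (-4 : ℤ) * α₀ ^ (-2 : ℤ) * α₂ ^ (-4 : ℤ)
              * (τ n m N * τ n (m+1) N) = 0) →
      ∀ n m N : ℤ,
        τ n m (N+1) * τ n (m+1) (N-1)
          - Q ^ (4*N) * γ ^ (4 : ℤ) * (τ n (m+1) (N+1) * τ n m (N-1))
          + Q ^ (4*m - 2*n - 4*N) * γ ^ (-4 : ℤ) * α₁ ^ (2 : ℤ) * α₂ ^ (-2 : ℤ)
              * (Q ^ (12*N) * γ ^ (12 : ℤ) - 1) * (τ n (m+1) N * τ n m N) = 0) := by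
  refine ⟨fun n m N => ?_, fun hα h1b h2b n m N => ?_⟩
  · linear_combination h2a n m N - Q ^ (4*N) * γ ^ (4 : ℤ) * h1a n m N
      - α₀ ^ (-3 : ℤ) * α₁ ^ (-1 : ℤ) * α₂ ^ (-2 : ℤ) * (τ (n+1) (m+1) N * τ n (m-1) N)
          * mid_coeff_eq_n hQ hγ n m N
      - α₀ ^ (6 : ℤ) * α₁ ^ (2 : ℤ) * α₂ ^ (4 : ℤ) * (τ (n+1) m N * τ n m N)
          * last_coeff_eq_n hQ hγ n m N
  · linear_combination h2b n m N - Q ^ (4*N) * γ ^ (4 : ℤ) * h1b n m N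
      - τ (n+1) (m+1) N * τ (n-1) m N * mid_coeff_eq_m hQ hγ hα n m N
      - τ n (m+1) N * τ n m N * last_coeff_eq_m hQ hγ hα n m N

/-- Derivation of the bilinear equations (3.26) and (3.27) for the τ function of the Painlevé
system of type (A₂+A₁)⁽¹⁾ from the bilinear equations (B.17), (B.20), (B.18), (B.21) of
Kajiwara–Nakazono–Tsuda. -/
theorem stmt_9 (Q γ α₀ α₁ α₂ : ℂ)
    (hQ : Q ≠ 0) (hγ : γ ≠ 0) (hα₀ : α₀ ≠ 0) (hα₁ : α₁ ≠ 0) (hα₂ : α₂ ≠ 0)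
    (τ : ℤ → ℤ → ℤ → ℂ)
    (h1a : ∀ n m N : ℤ,
      τ (n+1) m (N+1) * τ n m (N-1)
        - Q ^ (m - 2*n - 2*N) * γ ^ (-2 : ℤ) * α₀ ^ (-3 : ℤ) * α₁ ^ (-1 : ℤ) * α₂ ^ (-2 : ℤ)
            * (τ (n+1) (m+1) N * τ n (m-1) N)
        - Q ^ (4*n - 2*m + 4*N) * γ ^ (4 : ℤ) * α₀ ^ (6 : ℤ) * α₁ ^ (2 : ℤ) * α₂ ^ (4 : ℤ)
            * (τ (n+1) m N * τ n m N) = 0)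
    (h2a : ∀ n m N : ℤ,
      τ n m (N+1) * τ (n+1) m (N-1)
        - Q ^ (-2*n + m + 2*N) * γ ^ (2 : ℤ) * α₀ ^ (-3 : ℤ) * α₁ ^ (-1 : ℤ) * α₂ ^ (-2 : ℤ)
            * (τ n (m-1) N * τ (n+1) (m+1) N)
        - Q ^ (4*n - 2*m - 4*N) * γ ^ (-4 : ℤ) * α₀ ^ (6 : ℤ) * α₁ ^ (2 : ℤ) * α₂ ^ (4 : ℤ)
            * (τ n m N * τ (n+1) m N) = 0) :
    (∀ n m N : ℤ,
      τ n m (N+1) * τ (n+1) m (N-1)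
        - Q ^ (4*N) * γ ^ (4 : ℤ) * (τ (n+1) m (N+1) * τ n m (N-1))
        + Q ^ (4*n - 2*m - 4*N) * γ ^ (-4 : ℤ) * α₀ ^ (6 : ℤ) * α₁ ^ (2 : ℤ) * α₂ ^ (4 : ℤ)
            * (Q ^ (12*N) * γ ^ (12 : ℤ) - 1) * (τ (n+1) m N * τ n m N) = 0)
    ∧ (α₀ * α₁ * α₂ = Q →
      (∀ n m N : ℤ,
        τ n (m+1) (N+1) * τ n m (N-1)
          - Q ^ (n - 2*m - 2*N) * γ ^ (-2 : ℤ) * α₁ ^ (-1 : ℤ) * α₂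
              * (τ (n-1) m N * τ (n+1) (m+1) N)
          - Q ^ (-2*n + 4*m + 4*N) * γ ^ (4 : ℤ) * α₁ ^ (2 : ℤ) * α₂ ^ (-2 : ℤ)
              * (τ n (m+1) N * τ n m N) = 0) →
      (∀ n m N : ℤ,
        τ n m (N+1) * τ n (m+1) (N-1)
          - Q ^ (n - 2*m + 2*N - 1) * γ ^ (2 : ℤ) * α₀ * α₂ ^ (2 : ℤ)
              * (τ (n+1) (m+1) N * τ (n-1) m N)
          - Q ^ (-2*n + 4*m - 4*N + 2) * γ ^ (-4 : ℤ) * α₀ ^ (-2 : ℤ) * α₂ ^ (-4 : ℤ)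
              * (τ n m N * τ n (m+1) N) = 0) →
      ∀ n m N : ℤ,
        τ n m (N+1) * τ n (m+1) (N-1)
          - Q ^ (4*N) * γ ^ (4 : ℤ) * (τ n (m+1) (N+1) * τ n m (N-1))
          + Q ^ (4*m - 2*n - 4*N) * γ ^ (-4 : ℤ) * α₁ ^ (2 : ℤ) * α₂ ^ (-2 : ℤ)
              * (Q ^ (12*N) * γ ^ (12 : ℤ) - 1) * (τ n (m+1) N * τ n m N) = 0) :=
  stmt_9_general Q γ α₀ α₁ α₂ hQ hγ τ h1a h2a
end

section
/- Let Q, γ, α₀, α₁, α₂ ∈ ℂ∖{0} and let τ : ℤ³ → ℂ (arguments (n,m,N)) be nowhere vanishing and satisfy, for all (n,m,N): τ(n,m,N+1)τ(n+1,m,N−1) − Q^{4N}γ⁴·τ(n+1,m,N+1)τ(n,m,N−1) + Q^{4n−2m−4N}γ^{−4}α₀⁶α₁²α₂⁴(Q^{12N}γ^{12}−1)·τ(n+1,m,N)τ(n,m,N) = 0 and τ(n,m,N+1)τ(n,m+1,N−1) − Q^{4N}γ⁴·τ(n,m+1,N+1)τ(n,m,N−1) + Q^{4m−2n−4N}γ^{−4}α₁²α₂^{−2}(Q^{12N}γ^{12}−1)·τ(n,m+1,N)τ(n,m,N)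 = 0. Fix N ∈ ℤ with Q^{12(N+1)}γ^{12} ≠ 1 and define z(n,m) = (Q^{4N+4}γ⁴)^{n+m}·τ(n,m,N+2)/τ(n,m,N). Then for all (n,m) ∈ ℤ² the differences z(n,m)−z(n+1,m), z(n+1,m+1)−z(n,m+1), z(n+1,m)−z(n+1,m+1), z(n,m+1)−z(n,m) are nonzero and ((z(n,m)−z(n+1,m))(z(n+1,m+1)−z(n,m+1))) / ((z(n+1,m)−z(n+1,m+1))(z(n,m+1)−z(n,m))) = Q^{12(n−m)}·α₀^{12}·α₂^{12}; that is, z satisfies the discrete Schwarzian KdV equation with λ(n)/μ(m) = Q^{12n−12m}α₀^{12}α₂^{12} (equivalently q^{2n−2m}a₀²a₂² with q = Q⁶, a₀ = α₀⁶, a₂ = α₂⁶). -/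
/-!
At level `N + 1` each bilinear equation says that a lattice difference of `z` factorizes,
`z(n,m) - z(n+1,m) = a(n,m) τ(n,m,N+1) τ(n+1,m,N+1) / (τ(n,m,N) τ(n+1,m,N))`, and likewise in
the `m`-direction with a coefficient `b`. In the cross-ratio all `τ`-factors cancel, leaving
`a(n,m) a(n,m+1) / (b(n+1,m) b(n,m))`, a monomial in `Q` and the `αᵢ`.
-/

theorem sub_mul_mul_eq_of_bilinear {K : Type*} [Field K] {z z' u u' t t' s s' ρ κ e : K}
    (ht : t ≠ 0) (ht' : t' ≠ 0) (hz : z = ρ * u / t) (hz' : z' = ρ * κ * u' / t')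
    (h : u * t' - κ * (u' * t) + e * (s' * s) = 0) :
    (z - z') * (t * t') = -(ρ * e) * (s * s') := by
  subst hz hz'
  field_simp
  linear_combination ρ * h

theorem crossRatio_eq_of_factorized_differences {K : Type*} [Field K] {z a b f g : ℤ → ℤ → K}
    (ha : ∀ n m, a n m ≠ 0) (hb : ∀ n m, b n m ≠ 0) (hf : ∀ n m, f n m ≠ 0)
    (hg : ∀ n m, g n m ≠ 0)
    (hza : ∀ n m, (z n m - z (n+1) m) * (g n m * g (n+1) m) = a n m * (f n m * f (n+1) m))
    (hzb : ∀ n m, (z n m - z n (m+1)) * (g n m * g n (m+1)) = b n m * (f n m * f n (m+1)))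
    (n m : ℤ) :
    z n m - z (n+1) m ≠ 0 ∧ z (n+1) (m+1) - z n (m+1) ≠ 0
      ∧ z (n+1) m - z (n+1) (m+1) ≠ 0 ∧ z n (m+1) - z n m ≠ 0
      ∧ ((z n m - z (n+1) m) * (z (n+1) (m+1) - z n (m+1)))
          / ((z (n+1) m - z (n+1) (m+1)) * (z n (m+1) - z n m))
        = a n m * a n (m+1) / (b (n+1) m * b n m) := by
  have hx : ∀ n m, z n m - z (n+1) m = a n m * (f n m * f (n+1) m) / (g n m * g (n+1) m) :=
    fun n m => eq_div_of_mul_eq (mul_ne_zero (hg _ _) (hg _ _)) (hza n m)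
  have hy : ∀ n m, z n m - z n (m+1) = b n m * (f n m * f n (m+1)) / (g n m * g n (m+1)) :=
    fun n m => eq_div_of_mul_eq (mul_ne_zero (hg _ _) (hg _ _)) (hzb n m)
  rw [← neg_sub (z n (m+1)), ← neg_sub (z n m) (z n (m+1)), hx, hx, hy, hy]
  refine ⟨by simp [*], by simp [*], by simp [*], by simp [*], ?_⟩
  field_simp (disch := simp [*])

/-- The ratio `z(n,m) = (Q^{4N+4}γ⁴)^{n+m} τ(n,m,N+2)/τ(n,m,N)` built from a nowhere vanishing
solution of the bilinear equations of the (A₂+A₁)⁽¹⁾ Painlevé system satisfies the discrete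
Schwarzian KdV equation with cross-ratio `Q^{12(n−m)} α₀¹² α₂¹²` (i.e. `q^{2n−2m} a₀² a₂²`). -/
theorem stmt_10 (Q γ α₀ α₁ α₂ : ℂ)
    (hQ : Q ≠ 0) (hγ : γ ≠ 0) (hα₀ : α₀ ≠ 0) (hα₁ : α₁ ≠ 0) (hα₂ : α₂ ≠ 0)
    (τ : ℤ → ℤ → ℤ → ℂ) (hτ : ∀ n m N : ℤ, τ n m N ≠ 0)
    (hbl1 : ∀ n m N : ℤ,
      τ n m (N+1) * τ (n+1) m (N-1)
        - Q ^ (4*N) * γ ^ (4 : ℤ) * (τ (n+1) m (N+1) * τ n m (N-1))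
        + Q ^ (4*n - 2*m - 4*N) * γ ^ (-4 : ℤ) * α₀ ^ (6 : ℤ) * α₁ ^ (2 : ℤ) * α₂ ^ (4 : ℤ)
            * (Q ^ (12*N) * γ ^ (12 : ℤ) - 1) * (τ (n+1) m N * τ n m N) = 0)
    (hbl2 : ∀ n m N : ℤ,
      τ n m (N+1) * τ n (m+1) (N-1)
        - Q ^ (4*N) * γ ^ (4 : ℤ) * (τ n (m+1) (N+1) * τ n m (N-1))
        + Q ^ (4*m - 2*n - 4*N) * γ ^ (-4 : ℤ) * α₁ ^ (2 : ℤ) * α₂ ^ (-2 : ℤ)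
            * (Q ^ (12*N) * γ ^ (12 : ℤ) - 1) * (τ n (m+1) N * τ n m N) = 0)
    (N : ℤ) (hN : Q ^ (12*(N+1)) * γ ^ (12 : ℤ) ≠ 1)
    (z : ℤ → ℤ → ℂ)
    (hz : ∀ n m : ℤ,
      z n m = (Q ^ (4*N + 4) * γ ^ (4 : ℤ)) ^ (n + m) * τ n m (N+2) / τ n m N) :
    ∀ n m : ℤ,
      z n m - z (n+1) m ≠ 0 ∧ z (n+1) (m+1) - z n (m+1) ≠ 0
      ∧ z (n+1) m - z (n+1) (m+1) ≠ 0 ∧ z n (m+1) - z n m ≠ 0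
      ∧ ((z n m - z (n+1) m) * (z (n+1) (m+1) - z n (m+1)))
          / ((z (n+1) m - z (n+1) (m+1)) * (z n (m+1) - z n m))
        = Q ^ (12*(n - m)) * α₀ ^ (12 : ℤ) * α₂ ^ (12 : ℤ) := by
  intro n m
  set c := Q ^ (4*N + 4) * γ ^ (4 : ℤ) with hc_def
  set S := Q ^ (12*(N+1)) * γ ^ (12 : ℤ) - 1
  have hc : c ≠ 0 := by positivity
  have hS : S ≠ 0 := sub_ne_zero.2 hN
  have hc4 : Q ^ (4*(N+1)) * γ ^ (4 : ℤ) = c := by rw [hc_def]; ring_nf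
  have hzn : ∀ a b, z (a+1) b = c ^ (a+b) * c * τ (a+1) b (N+2) / τ (a+1) b N := fun a b => by
    rw [hz, ← zpow_add_one₀ hc]; ring_nf
  have hzm : ∀ a b, z a (b+1) = c ^ (a+b) * c * τ a (b+1) (N+2) / τ a (b+1) N := fun a b => by
    rw [hz, ← zpow_add_one₀ hc]; ring_nf
  obtain ⟨h₁, h₂, h₃, h₄, hratio⟩ := crossRatio_eq_of_factorized_differences
    (a := fun a b => -(c ^ (a+b) * (Q ^ (4*a - 2*b - 4*(N+1)) * γ ^ (-4 : ℤ) * α₀ ^ (6 : ℤ)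
      * α₁ ^ (2 : ℤ) * α₂ ^ (4 : ℤ) * S)))
    (b := fun a b => -(c ^ (a+b) * (Q ^ (4*b - 2*a - 4*(N+1)) * γ ^ (-4 : ℤ)
      * α₁ ^ (2 : ℤ) * α₂ ^ (-2 : ℤ) * S)))
    (fun _ _ => neg_ne_zero.2 (mul_ne_zero (zpow_ne_zero _ hc) (mul_ne_zero (by positivity) hS)))
    (fun _ _ => neg_ne_zero.2 (mul_ne_zero (zpow_ne_zero _ hc) (mul_ne_zero (by positivity) hS)))
    (fun a b => hτ a b (N+1)) (fun a b => hτ a b N)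
    (fun a b => sub_mul_mul_eq_of_bilinear (hτ _ _ _) (hτ _ _ _) (hz a b) (hzn a b)
      (by simpa only [add_assoc, Int.reduceAdd, add_sub_cancel_right, hc4] using hbl1 a b (N+1)))
    (fun a b => sub_mul_mul_eq_of_bilinear (hτ _ _ _) (hτ _ _ _) (hz a b) (hzm a b)
      (by simpa only [add_assoc, Int.reduceAdd, add_sub_cancel_right, hc4] using hbl2 a b (N+1)))
    n m
  refine ⟨h₁, h₂, h₃, h₄, hratio.trans ?_⟩
  simp only [zpow_sub₀ hQ, zpow_add₀ hQ, mul_comm (4:ℤ), mul_comm (2:ℤ), mul_comm (12:ℤ),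
    zpow_mul, add_mul, zpow_add₀ hc]
  field_simp
end

section
/- Let c, r ∈ ℂ∖{0} and let τ : ℤ⁴ → ℂ (arguments (k,l,m,n)) be nowhere vanishing and satisfy, for all (k,l,m,n) ∈ ℤ⁴, the four bilinear relations: (i) τ(k−1,l−1,m−2,n)τ(k,l−1,m,n+1) + τ(k−1,l−2,m−2,n+1)τ(k,l,m,n) = −c·r·τ(k,l−1,m−1,n)τ(k−1,l−1,m−1,n+1); (ii) τ(k−1,l−2,m−2,n)τ(k,l,m,n) − τ(k−1,l−1,m−2,n)τ(k,l−1,m,n) = c·τ(k−1,l−1,m−1,n)τ(k,l−1,m−1,n); (iii) τ(k−2,l−2,m−2,n+1)τ(k,l−1,m,n) + τ(k−1,l−2,m−2,n)τ(k−1,l−1,m,n+1) = −c·r·τ(k−1,l−1,m−1,n)τ(k−1,l−2,m−1,n+1); (iv) τ(k−1,l−2,m−2,n+1)τ(k−1,l−1,m,n+1) − τ(k−2,l−2,m−2,n+1)τ(k,l−1,m,n+1) = c·τ(k−1,l−2,m−1,n+1)τ(k−1,l−1,m−1,n+1). Define z : ℤ² → ℂ by: if n+m is even, with N = (n+m)/2,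 z(n,m) = (−1)^{n−1}·τ(−N−1,−N−1,−2,n)/τ(−N,−N,0,n); if n+m is odd, with N = (n+m+1)/2, z(n,m) = (−1)^{n−1}·τ(−N,−N−1,−2,n)/τ(−N+1,−N,0,n). Then for all (n,m) ∈ ℤ² the differences z(n,m)−z(n+1,m), z(n+1,m+1)−z(n,m+1), z(n+1,m)−z(n+1,m+1), z(n,m+1)−z(n,m) are nonzero and ((z(n,m)−z(n+1,m))(z(n+1,m+1)−z(n,m+1))) / ((z(n+1,m)−z(n+1,m+1))(z(n,m+1)−z(n,m))) = r²; that is, z satisfies the discrete Schwarzian KdV equation with constant cross-ratio 1/t where r = t^{−1/2}. -/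
/-!
Around every elementary square of the lattice the four values of `z` are, up to the common
sign `s = (-1)^(n-1)` and alternating signs, ratios `a/A, b/B, d/D, c/C` of τ values on two
adjacent layers. Each edge difference of `z` is then `s` times a bilinear expression in these
τ values over a product of denominators, and the four bilinear relations turn the four
expressions into `-(c r)·WX`, `±c·YW`, `-(c r)·YZ`, `±c·ZX` for four τ values `W, X, Y, Z`
of the middle layer. In the cross-ratio everything but `(c r)² / c² = r²` cancels.
-/

def HasCrossRatio {K : Type*} [Field K] (p q w v κ : K) : Prop :=
  p - q ≠ 0 ∧ w - v ≠ 0 ∧ q - w ≠ 0 ∧ v - p ≠ 0 ∧ (p - q) * (w - v) / ((q - w) * (v - p)) = κ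

theorem hasCrossRatio_of_bilinear {K : Type*} [Field K] {s a b c d A B C D α β W X Y Z : K}
    (hs : s ≠ 0) (hA : A ≠ 0) (hB : B ≠ 0) (hC : C ≠ 0) (hD : D ≠ 0) (hα : α ≠ 0) (hβ : β ≠ 0)
    (hW : W ≠ 0) (hX : X ≠ 0) (hY : Y ≠ 0) (hZ : Z ≠ 0)
    (h₁ : a * B + b * A = α * (W * X)) (h₂ : c * A - a * C = β * (Y * W))
    (h₃ : d * C + c * D = α * (Y * Z)) (h₄ : b * D - d * B = β * (Z * X)) :
    HasCrossRatio (s * a / A) (-(s * b) / B) (-(s * d) / D) (s * c / C) ((α / β) ^ 2) := by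
  have hpq : s * a / A - -(s * b) / B = s * α * (W * X) / (A * B) := by
    rw [mul_assoc s α, ← h₁]; field_simp; ring
  have hwv : -(s * d) / D - s * c / C = -(s * α * (Y * Z)) / (C * D) := by
    rw [mul_assoc s α, ← h₃]; field_simp; ring
  have hqw : -(s * b) / B - -(s * d) / D = -(s * β * (Z * X)) / (B * D) := by
    rw [mul_assoc s β, ← h₄]; field_simp; ring
  have hvp : s * c / C - s * a / A = s * β * (Y * W) / (A * C) := by
    rw [mul_assoc s β, ← h₂]; field_simp
  rw [HasCrossRatio, hpq, hwv, hqw, hvp]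
  refine ⟨by simp [*], by simp [*], by simp [*], by simp [*], ?_⟩
  field_simp

structure IsPVITau (c r : ℂ) (τ : ℤ → ℤ → ℤ → ℤ → ℂ) : Prop where
  ne_zero : ∀ k l m n, τ k l m n ≠ 0
  bilinear₁ : ∀ k l m n : ℤ,
      τ (k-1) (l-1) (m-2) n * τ k (l-1) m (n+1) + τ (k-1) (l-2) (m-2) (n+1) * τ k l m n
        = -(c * r) * (τ k (l-1) (m-1) n * τ (k-1) (l-1) (m-1) (n+1))
  bilinear₂ : ∀ k l m n : ℤ,
      τ (k-1) (l-2) (m-2) n * τ k l m n - τ (k-1) (l-1) (m-2) n * τ k (l-1) m n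
        = c * (τ (k-1) (l-1) (m-1) n * τ k (l-1) (m-1) n)
  bilinear₃ : ∀ k l m n : ℤ,
      τ (k-2) (l-2) (m-2) (n+1) * τ k (l-1) m n + τ (k-1) (l-2) (m-2) n * τ (k-1) (l-1) m (n+1)
        = -(c * r) * (τ (k-1) (l-1) (m-1) n * τ (k-1) (l-2) (m-1) (n+1))
  bilinear₄ : ∀ k l m n : ℤ,
      τ (k-1) (l-2) (m-2) (n+1) * τ (k-1) (l-1) m (n+1)
          - τ (k-2) (l-2) (m-2) (n+1) * τ k (l-1) m (n+1)
        = c * (τ (k-1) (l-2) (m-1) (n+1) * τ (k-1) (l-1) (m-1) (n+1))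

namespace IsPVITau

variable {c r : ℂ} {τ : ℤ → ℤ → ℤ → ℤ → ℂ}

-- The square of `z` at `(n, m)` with `n + m = -2k`, for `j = 0` and `s = (-1)^(n-1)`.
theorem hasCrossRatio_even (hτ : IsPVITau c r τ) (hc : c ≠ 0) (hr : r ≠ 0) {s : ℂ} (hs : s ≠ 0)
    (k j n : ℤ) :
    HasCrossRatio (s * τ (k-1) (k-1) (j-2) n / τ k k j n)
      (-(s * τ (k-1) (k-2) (j-2) (n+1)) / τ k (k-1) j (n+1))
      (-(s * τ (k-2) (k-2) (j-2) (n+1)) / τ (k-1) (k-1) j (n+1))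
      (s * τ (k-1) (k-2) (j-2) n / τ k (k-1) j n) (r ^ 2) := by
  have h := hasCrossRatio_of_bilinear hs (hτ.ne_zero _ _ _ _) (hτ.ne_zero _ _ _ _)
    (hτ.ne_zero _ _ _ _) (hτ.ne_zero _ _ _ _) (by simp [hc, hr] : -(c * r) ≠ 0) hc
    (hτ.ne_zero _ _ _ _) (hτ.ne_zero _ _ _ _) (hτ.ne_zero _ _ _ _) (hτ.ne_zero _ _ _ _)
    (hτ.bilinear₁ k k j n) (hτ.bilinear₂ k k j n) (hτ.bilinear₃ k k j n) (hτ.bilinear₄ k k j n)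
  rwa [neg_div c, neg_sq, mul_div_cancel_left₀ r hc] at h

-- The square of `z` at `(n, m)` with `n + m = -2k - 1`, for `j = 0` and `s = (-1)^(n-1)`.
theorem hasCrossRatio_odd (hτ : IsPVITau c r τ) (hc : c ≠ 0) (hr : r ≠ 0) {s : ℂ} (hs : s ≠ 0)
    (k j n : ℤ) :
    HasCrossRatio (s * τ k (k-1) (j-2) n / τ (k+1) k j n)
      (-(s * τ (k-1) (k-1) (j-2) (n+1)) / τ k k j (n+1))
      (-(s * τ (k-1) (k-2) (j-2) (n+1)) / τ k (k-1) j (n+1))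
      (s * τ (k-1) (k-1) (j-2) n / τ k k j n) (r ^ 2) := by
  have h₁ := hτ.bilinear₃ (k+1) (k+1) j n
  have h₂ := hτ.bilinear₄ (k+1) (k+1) j (n-1)
  have h₃ := hτ.bilinear₁ k k j n
  have h₄ := hτ.bilinear₂ k k j (n+1)
  simp only [add_sub_cancel_right, sub_add_cancel, show k + 1 - 2 = k - 1 by ring] at h₁ h₂ h₃ h₄
  rw [add_comm (_ * _)] at h₁ h₃
  have h := hasCrossRatio_of_bilinear hs (hτ.ne_zero _ _ _ _) (hτ.ne_zero _ _ _ _)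
    (hτ.ne_zero _ _ _ _) (hτ.ne_zero _ _ _ _) (by simp [hc, hr] : -(c * r) ≠ 0) (neg_ne_zero.2 hc)
    (hτ.ne_zero _ _ _ _) (hτ.ne_zero _ _ _ _) (hτ.ne_zero _ _ _ _) (hτ.ne_zero _ _ _ _)
    h₁ (by linear_combination -h₂) h₃ (by linear_combination -h₄)
  rwa [neg_div_neg_eq, mul_div_cancel_left₀ r hc] at h

end IsPVITau

/-- From a nowhere vanishing `τ : ℤ⁴ → ℂ` satisfying the four bilinear relations of the
Painlevé VI (type D₄⁽¹⁾) τ functions, the parity-dependent ratio `z(n,m)` satisfies the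
discrete Schwarzian KdV equation with constant cross-ratio `r² = 1/t`. -/
theorem stmt_11 (c r : ℂ) (hc : c ≠ 0) (hr : r ≠ 0)
    (τ : ℤ → ℤ → ℤ → ℤ → ℂ) (hτ : ∀ k l m n : ℤ, τ k l m n ≠ 0)
    (hb1 : ∀ k l m n : ℤ,
      τ (k-1) (l-1) (m-2) n * τ k (l-1) m (n+1) + τ (k-1) (l-2) (m-2) (n+1) * τ k l m n
        = -(c * r) * (τ k (l-1) (m-1) n * τ (k-1) (l-1) (m-1) (n+1)))
    (hb2 : ∀ k l m n : ℤ,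
      τ (k-1) (l-2) (m-2) n * τ k l m n - τ (k-1) (l-1) (m-2) n * τ k (l-1) m n
        = c * (τ (k-1) (l-1) (m-1) n * τ k (l-1) (m-1) n))
    (hb3 : ∀ k l m n : ℤ,
      τ (k-2) (l-2) (m-2) (n+1) * τ k (l-1) m n + τ (k-1) (l-2) (m-2) n * τ (k-1) (l-1) m (n+1)
        = -(c * r) * (τ (k-1) (l-1) (m-1) n * τ (k-1) (l-2) (m-1) (n+1)))
    (hb4 : ∀ k l m n : ℤ,
      τ (k-1) (l-2) (m-2) (n+1) * τ (k-1) (l-1) m (n+1)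
          - τ (k-2) (l-2) (m-2) (n+1) * τ k (l-1) m (n+1)
        = c * (τ (k-1) (l-2) (m-1) (n+1) * τ (k-1) (l-1) (m-1) (n+1)))
    (z : ℤ → ℤ → ℂ)
    (hz_even : ∀ n m N : ℤ, n + m = 2*N →
      z n m = (-1 : ℂ) ^ (n-1) * τ (-N-1) (-N-1) (-2) n / τ (-N) (-N) 0 n)
    (hz_odd : ∀ n m N : ℤ, n + m = 2*N - 1 →
      z n m = (-1 : ℂ) ^ (n-1) * τ (-N) (-N-1) (-2) n / τ (-N+1) (-N) 0 n) :
    ∀ n m : ℤ,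
      z n m - z (n+1) m ≠ 0 ∧ z (n+1) (m+1) - z n (m+1) ≠ 0
      ∧ z (n+1) m - z (n+1) (m+1) ≠ 0 ∧ z n (m+1) - z n m ≠ 0
      ∧ ((z n m - z (n+1) m) * (z (n+1) (m+1) - z n (m+1)))
          / ((z (n+1) m - z (n+1) (m+1)) * (z n (m+1) - z n m))
        = r ^ 2 := by
  have hPVI : IsPVITau c r τ := ⟨hτ, hb1, hb2, hb3, hb4⟩
  intro n m
  have hs : (-1 : ℂ) ^ (n - 1) ≠ 0 := zpow_ne_zero _ (by norm_num)
  have hsign : (-1 : ℂ) ^ (n + 1 - 1) = -(-1) ^ (n - 1) := by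
    rw [add_sub_right_comm, zpow_add_one₀ (by norm_num), mul_neg_one]
  show HasCrossRatio (z n m) (z (n+1) m) (z (n+1) (m+1)) (z n (m+1)) (r ^ 2)
  obtain ⟨N, hN | hN⟩ : ∃ N, n + m = 2 * N ∨ n + m = 2 * N - 1 := ⟨(n + m + 1) / 2, by omega⟩
  · have key := hPVI.hasCrossRatio_even hc hr hs (-N) 0 n
    convert key using 1
    · rw [hz_even n m N hN]; ring_nf
    · rw [hz_odd (n+1) m (N+1) (by omega), hsign]; ring_nf
    · rw [hz_even (n+1) (m+1) (N+1) (by omega), hsign]; ring_nf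
    · rw [hz_odd n (m+1) (N+1) (by omega)]; ring_nf
  · have key := hPVI.hasCrossRatio_odd hc hr hs (-N) 0 n
    convert key using 1
    · rw [hz_odd n m N hN]; ring_nf
    · rw [hz_even (n+1) m N (by omega), hsign]; ring_nf
    · rw [hz_odd (n+1) (m+1) (N+1) (by omega), hsign]; ring_nf
    · rw [hz_even n (m+1) N (by omega)]; ring_nf
end

section
/- Let z, v, w : ℤ³ → ℂ satisfy, for each i = 1,2,3 and all l = (l₁,l₂,l₃) ∈ ℤ³: z(l+eᵢ) − z(l) = v(l+eᵢ)·w(l), where eᵢ is the i-th standard unit vector. Then z satisfies the discrete Schwarzian KP equation in product form at every point of ℤ³: (z_{l₁+1}−z_{l₁+1,l₂+1})(z_{l₂+1}−z_{l₂+1,l₃+1})(z_{l₃+1}−z_{l₁+1,l₃+1}) = −(z_{l₁+1,l₂+1}−z_{l₂+1})(z_{l₂+1,l₃+1}−z_{l₃+1})(z_{l₁+1,l₃+1}−z_{l₁+1}). -/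
/-! Each of the six differences in the equation runs along an edge of the unit cube at `l`, from
a vertex `l + eᵢ` to `l + eᵢ + eⱼ`, so it factors as `v(l + eᵢ + eⱼ) · w(l + eᵢ)`. Both sides then
equal `−v₁₂ v₂₃ v₁₃ · w₁ w₂ w₃`. -/

theorem dSKP_product_form_of_edge_factorization {R : Type*} [CommRing R]
    {z₁ z₂ z₃ z₁₂ z₂₃ z₁₃ v₁₂ v₂₃ v₁₃ w₁ w₂ w₃ : R}
    (h₁₂₁ : z₁₂ - z₁ = v₁₂ * w₁) (h₁₂₂ : z₁₂ - z₂ = v₁₂ * w₂)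
    (h₂₃₂ : z₂₃ - z₂ = v₂₃ * w₂) (h₂₃₃ : z₂₃ - z₃ = v₂₃ * w₃)
    (h₁₃₃ : z₁₃ - z₃ = v₁₃ * w₃) (h₁₃₁ : z₁₃ - z₁ = v₁₃ * w₁) :
    (z₁ - z₁₂) * (z₂ - z₂₃) * (z₃ - z₁₃) = -((z₁₂ - z₂) * (z₂₃ - z₃) * (z₁₃ - z₁)) := by
  rw [← neg_sub z₁₂ z₁, ← neg_sub z₂₃ z₂, ← neg_sub z₁₃ z₃, h₁₂₁, h₁₂₂, h₂₃₂, h₂₃₃, h₁₃₃, h₁₃₁]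
  ring

/-- If `z(l+eᵢ) − z(l) = v(l+eᵢ)·w(l)` for `i = 1,2,3`, then `z` satisfies the discrete
Schwarzian KP equation in product form. -/
theorem stmt_13 (z v w : ℤ → ℤ → ℤ → ℂ)
    (h1 : ∀ l₁ l₂ l₃ : ℤ, z (l₁+1) l₂ l₃ - z l₁ l₂ l₃ = v (l₁+1) l₂ l₃ * w l₁ l₂ l₃)
    (h2 : ∀ l₁ l₂ l₃ : ℤ, z l₁ (l₂+1) l₃ - z l₁ l₂ l₃ = v l₁ (l₂+1) l₃ * w l₁ l₂ l₃)
    (h3 : ∀ l₁ l₂ l₃ : ℤ, z l₁ l₂ (l₃+1) - z l₁ l₂ l₃ = v l₁ l₂ (l₃+1) * w l₁ l₂ l₃) :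
    ∀ l₁ l₂ l₃ : ℤ,
      (z (l₁+1) l₂ l₃ - z (l₁+1) (l₂+1) l₃) * (z l₁ (l₂+1) l₃ - z l₁ (l₂+1) (l₃+1))
          * (z l₁ l₂ (l₃+1) - z (l₁+1) l₂ (l₃+1))
        = -((z (l₁+1) (l₂+1) l₃ - z l₁ (l₂+1) l₃) * (z l₁ (l₂+1) (l₃+1) - z l₁ l₂ (l₃+1))
            * (z (l₁+1) l₂ (l₃+1) - z (l₁+1) l₂ l₃)) := fun l₁ l₂ l₃ =>
  dSKP_product_form_of_edge_factorization (h2 (l₁+1) l₂ l₃) (h1 l₁ (l₂+1) l₃)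
    (h3 l₁ (l₂+1) l₃) (h2 l₁ l₂ (l₃+1)) (h1 l₁ l₂ (l₃+1)) (h3 (l₁+1) l₂ l₃)
end

section
/- Let z, u : ℤ² → ℂ and f₁, f₂ : ℤ → ℂ satisfy, for all (l₁,l₂) ∈ ℤ²: z(l₁+1,l₂) − z(l₁,l₂) = f₁(l₁)·u(l₁+1,l₂)·u(l₁,l₂) and z(l₁,l₂+1) − z(l₁,l₂) = f₂(l₂)·u(l₁,l₂+1)·u(l₁,l₂). Then for all (l₁,l₂) ∈ ℤ²: (z(l₁,l₂)−z(l₁+1,l₂))·(z(l₁+1,l₂+1)−z(l₁,l₂+1))·f₂(l₂)² = f₁(l₁)²·(z(l₁+1,l₂)−z(l₁+1,l₂+1))·(z(l₁,l₂+1)−z(l₁,l₂)); that is, z satisfies the discrete Schwarzian KdV equation in product form with λ(l₁) = f₁(l₁)² and μ(l₂) = f₂(l₂)². -/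
theorem dskdv_quad_of_edge_factorization {R : Type*} [CommRing R]
    {z₀₀ z₁₀ z₀₁ z₁₁ u₀₀ u₁₀ u₀₁ u₁₁ a b : R}
    (hbot : z₁₀ - z₀₀ = a * u₁₀ * u₀₀) (htop : z₁₁ - z₀₁ = a * u₁₁ * u₀₁)
    (hleft : z₀₁ - z₀₀ = b * u₀₁ * u₀₀) (hright : z₁₁ - z₁₀ = b * u₁₁ * u₁₀) :
    (z₀₀ - z₁₀) * (z₁₁ - z₀₁) * b ^ 2 = a ^ 2 * ((z₁₀ - z₁₁) * (z₀₁ - z₀₀)) :=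
  calc (z₀₀ - z₁₀) * (z₁₁ - z₀₁) * b ^ 2
      = -(a * u₁₀ * u₀₀) * (a * u₁₁ * u₀₁) * b ^ 2 := by rw [← neg_sub, hbot, htop]
    _ = a ^ 2 * (-(b * u₁₁ * u₁₀) * (b * u₀₁ * u₀₀)) := by ring
    _ = a ^ 2 * ((z₁₀ - z₁₁) * (z₀₁ - z₀₀)) := by rw [← neg_sub z₁₁, hright, hleft]

/-- If `z(l₁+1,l₂) − z(l₁,l₂) = f₁(l₁)u(l₁+1,l₂)u(l₁,l₂)` and
`z(l₁,l₂+1) − z(l₁,l₂) = f₂(l₂)u(l₁,l₂+1)u(l₁,l₂)`, then `z` satisfies the discrete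
Schwarzian KdV equation in product form with `λ = f₁²` and `μ = f₂²`. -/
theorem stmt_14 (z u : ℤ → ℤ → ℂ) (f₁ f₂ : ℤ → ℂ)
    (h1 : ∀ l₁ l₂ : ℤ, z (l₁+1) l₂ - z l₁ l₂ = f₁ l₁ * u (l₁+1) l₂ * u l₁ l₂)
    (h2 : ∀ l₁ l₂ : ℤ, z l₁ (l₂+1) - z l₁ l₂ = f₂ l₂ * u l₁ (l₂+1) * u l₁ l₂) :
    ∀ l₁ l₂ : ℤ,
      (z l₁ l₂ - z (l₁+1) l₂) * (z (l₁+1) (l₂+1) - z l₁ (l₂+1)) * f₂ l₂ ^ 2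
        = f₁ l₁ ^ 2 * ((z (l₁+1) l₂ - z (l₁+1) (l₂+1)) * (z l₁ (l₂+1) - z l₁ l₂)) :=
  fun l₁ l₂ =>
    dskdv_quad_of_edge_factorization (h1 l₁ l₂) (h1 l₁ (l₂+1)) (h2 l₁ l₂) (h2 (l₁+1) l₂)
end

section
/- Let b ∈ ℂ, a₁, a₂ : ℤ → ℂ, C ∈ ℂ∖{0}, and let σ : ℤ⁴ → ℂ (arguments (l₁,l₂,m,s)) satisfy, for k = 1,2 and all arguments: (1+a_k(l_k)b)·σ(l+e_k,m+1,s)·σ(l,m,s) − σ(l+e_k,m,s)·σ(l,m+1,s) = a_k(l_k)·b·σ(l+e_k,m,s+1)·σ(l,m+1,s−1), where l = (l₁,l₂), and also σ(l,m+1,s) = C·σ(l,m,s+2) for all (l,m,s). Then for each fixed m, the function σ satisfies, for k = 1,2 and all (l₁,l₂,s): (1+a_k(l_k)b)·σ(l+e_k,m,s+2)·σ(l,m,s) − σ(l+e_k,m,s)·σ(l,m,s+2) = a_k(l_k)·b·σ(l+e_k,m,s+1)·σ(l,m,s+1). -/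
/-- `u`, `v` stand for `σ(l, m, ·)`, `σ(l + e_k, m, ·)` and `u'`, `v'` for the same at `m + 1`. -/
theorem dSKdV_bilinear_of_toda_bilinear {R : Type*} [CommRing R] [IsDomain R] {C α : R}
    (hC : C ≠ 0) {u v u' v' : ℤ → R}
    (hu : ∀ s, u' s = C * u (s + 2)) (hv : ∀ s, v' s = C * v (s + 2)) (s : ℤ)
    (htoda : (1 + α) * v' s * u s - v s * u' s = α * v (s + 1) * u' (s - 1)) :
    (1 + α) * v (s + 2) * u s - v s * u (s + 2) = α * v (s + 1) * u (s + 1) := by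
  rw [hu, hu, hv, show s - 1 + 2 = s + 1 by ring] at htoda
  exact mul_left_cancel₀ hC (by linear_combination htoda)

/-- Reduction of the bilinear discrete two-dimensional Toda lattice equations to the bilinear
form of the discrete Schwarzian KdV equation: the auxiliary `m`-shift is eliminated using the
constraint `σ(l,m+1,s) = C·σ(l,m,s+2)`. -/
theorem stmt_18 (b : ℂ) (a₁ a₂ : ℤ → ℂ) (C : ℂ) (hC : C ≠ 0)
    (σ : ℤ → ℤ → ℤ → ℤ → ℂ)
    (hσ1 : ∀ l₁ l₂ m s : ℤ,
      (1 + a₁ l₁ * b) * σ (l₁+1) l₂ (m+1) s * σ l₁ l₂ m s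
          - σ (l₁+1) l₂ m s * σ l₁ l₂ (m+1) s
        = a₁ l₁ * b * σ (l₁+1) l₂ m (s+1) * σ l₁ l₂ (m+1) (s-1))
    (hσ2 : ∀ l₁ l₂ m s : ℤ,
      (1 + a₂ l₂ * b) * σ l₁ (l₂+1) (m+1) s * σ l₁ l₂ m s
          - σ l₁ (l₂+1) m s * σ l₁ l₂ (m+1) s
        = a₂ l₂ * b * σ l₁ (l₂+1) m (s+1) * σ l₁ l₂ (m+1) (s-1))
    (hred : ∀ l₁ l₂ m s : ℤ, σ l₁ l₂ (m+1) s = C * σ l₁ l₂ m (s+2)) :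
    ∀ m : ℤ, ∀ l₁ l₂ s : ℤ,
      ((1 + a₁ l₁ * b) * σ (l₁+1) l₂ m (s+2) * σ l₁ l₂ m s
          - σ (l₁+1) l₂ m s * σ l₁ l₂ m (s+2)
        = a₁ l₁ * b * σ (l₁+1) l₂ m (s+1) * σ l₁ l₂ m (s+1))
      ∧ ((1 + a₂ l₂ * b) * σ l₁ (l₂+1) m (s+2) * σ l₁ l₂ m s
          - σ l₁ (l₂+1) m s * σ l₁ l₂ m (s+2)
        = a₂ l₂ * b * σ l₁ (l₂+1) m (s+1) * σ l₁ l₂ m (s+1)) := by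
  intro m l₁ l₂ s
  exact ⟨dSKdV_bilinear_of_toda_bilinear hC (hred l₁ l₂ m) (hred (l₁+1) l₂ m) s (hσ1 l₁ l₂ m s),
    dSKdV_bilinear_of_toda_bilinear hC (hred l₁ l₂ m) (hred l₁ (l₂+1) m) s (hσ2 l₁ l₂ m s)⟩
end
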